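/- arXiv:0910.2376 — 5 statements merged into one kernel-verified Lean document; each statement's English description precedes it below -/
import Mathlib

section
/- For every n ≥ 1 and every k ≥ 0, the number of centrosymmetric 132-avoiding permutations of {1,…,2n} having exactly k descents equals the binomial coefficient C(n−1, ⌊k/2⌋). -/
/-! Reverse-complement `σ ↦ (i ↦ N + 1 - σ (N + 1 - i))` exchanges the patterns 132 and 213, and
the centrosymmetric permutations are exactly its fixed points; so the permutations counted are
the {132, 213}-avoiding ones with a descent set symmetric under `d ↦ 2n - d`. Avoiding 132 and
213 means that for `i < j`, `σ i < σ j` iff no descent lies in `[i, j)`: `σ` is a decreasing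
sequence of increasing runs, determined by its descent set, and every subset of `[1, N - 1]`
occurs. A symmetric subset of `[1, 2n - 1]` with `k` elements is determined by its part below
`n`, which has `⌊k/2⌋` elements, since it contains `n` iff `k` is odd. -/

/-- The value of the permutation `σ` of `{1,…,N}` (modeled on `Fin N`) at a
1-indexed position `i` (so `pval σ i ∈ {1,…,N}` for `1 ≤ i ≤ N`). -/
def pval {N : ℕ} (σ : Equiv.Perm (Fin N)) (i : ℕ) : ℕ :=
  if h : i - 1 < N then ((σ ⟨i - 1, h⟩ : ℕ) + 1) else 0

/-- `σ` is centrosymmetric: `σ(i) + σ(N+1−i) = N+1` for all `1 ≤ i ≤ N`. -/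
def IsCentro {N : ℕ} (σ : Equiv.Perm (Fin N)) : Prop :=
  ∀ i, 1 ≤ i → i ≤ N → pval σ i + pval σ (N + 1 - i) = N + 1

/-- `σ` avoids the pattern 132. -/
def Avoids132 {N : ℕ} (σ : Equiv.Perm (Fin N)) : Prop :=
  ¬ ∃ i j k, 1 ≤ i ∧ i < j ∧ j < k ∧ k ≤ N ∧
    pval σ i < pval σ k ∧ pval σ k < pval σ j

/-- `σ` avoids the pattern 123. -/
def Avoids123 {N : ℕ} (σ : Equiv.Perm (Fin N)) : Prop :=
  ¬ ∃ i j k, 1 ≤ i ∧ i < j ∧ j < k ∧ k ≤ N ∧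
    pval σ i < pval σ j ∧ pval σ j < pval σ k

/-- The number of descents of `σ`: positions `1 ≤ i ≤ N−1` with `σ(i) > σ(i+1)`. -/
noncomputable def des {N : ℕ} (σ : Equiv.Perm (Fin N)) : ℕ :=
  Nat.card {i : ℕ // 1 ≤ i ∧ i + 1 ≤ N ∧ pval σ (i + 1) < pval σ i}

namespace CentrosymmetricAvoid132

variable {N : ℕ} {σ τ : Equiv.Perm (Fin N)}

lemma pval_eq (σ : Equiv.Perm (Fin N)) {i : ℕ} (h1 : 1 ≤ i) (h2 : i ≤ N) :
    pval σ i = (σ ⟨i - 1, by omega⟩ : ℕ) + 1 :=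
  dif_pos _

lemma pval_succ (σ : Equiv.Perm (Fin N)) (a : Fin N) : pval σ (a + 1) = (σ a : ℕ) + 1 :=
  pval_eq σ (by omega) a.isLt

lemma pval_inj (σ : Equiv.Perm (Fin N)) {i j : ℕ} (hi : 1 ≤ i) (hi' : i ≤ N)
    (hj : 1 ≤ j) (hj' : j ≤ N) : pval σ i = pval σ j ↔ i = j := by
  rw [pval_eq σ hi hi', pval_eq σ hj hj', add_left_inj, Fin.val_inj, σ.apply_eq_iff_eq,
    Fin.mk.injEq]
  omega

lemma pval_pos (σ : Equiv.Perm (Fin N)) {i : ℕ} (h1 : 1 ≤ i) (h2 : i ≤ N) : 1 ≤ pval σ i := by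
  rw [pval_eq σ h1 h2]
  omega

lemma pval_le (σ : Equiv.Perm (Fin N)) {i : ℕ} (h1 : 1 ≤ i) (h2 : i ≤ N) : pval σ i ≤ N := by
  rw [pval_eq σ h1 h2]
  omega

lemma perm_eq_of_lt_iff (h : ∀ a b, a < b → (σ a < σ b ↔ τ a < τ b)) : σ = τ := by
  have hlt : ∀ a b, σ a < σ b ↔ τ a < τ b := by
    intro a b
    rcases lt_trichotomy a b with hab | rfl | hab
    · exact h a b hab
    · simp
    · have := σ.injective.ne hab.ne'
      have := τ.injective.ne hab.ne'
      have := h b a hab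
      omega
  have hmono : StrictMono (σ * τ⁻¹) := fun a b hab => by
    simpa [Equiv.Perm.mul_apply] using (hlt (τ⁻¹ a) (τ⁻¹ b)).2 (by simpa using hab)
  rw [← mul_inv_eq_one]
  exact Equiv.ext (congrFun hmono.eq_id)

def Avoids213 (σ : Equiv.Perm (Fin N)) : Prop :=
  ¬ ∃ i j k, 1 ≤ i ∧ i < j ∧ j < k ∧ k ≤ N ∧
    pval σ j < pval σ i ∧ pval σ i < pval σ k

def descSet (σ : Equiv.Perm (Fin N)) : Finset ℕ :=
  (Finset.Icc 1 (N - 1)).filter fun d => pval σ (d + 1) < pval σ d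

lemma mem_descSet {d : ℕ} : d ∈ descSet σ ↔ 1 ≤ d ∧ d + 1 ≤ N ∧ pval σ (d + 1) < pval σ d := by
  simp only [descSet, Finset.mem_filter, Finset.mem_Icc]
  omega

lemma descSet_subset (σ : Equiv.Perm (Fin N)) : descSet σ ⊆ Finset.Icc 1 (N - 1) :=
  Finset.filter_subset _ _

lemma des_eq_card_descSet (σ : Equiv.Perm (Fin N)) : des σ = (descSet σ).card := by
  rw [des, ← Nat.card_eq_finsetCard]
  exact Nat.card_congr (Equiv.subtypeEquivRight fun d => mem_descSet.symm)

lemma notMem_descSet {d : ℕ} (h1 : 1 ≤ d) (h2 : d + 1 ≤ N) :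
    d ∉ descSet σ ↔ pval σ d < pval σ (d + 1) := by
  have := (pval_inj σ h1 (by omega) (by omega) h2 (j := d + 1)).not.2 (by omega)
  rw [mem_descSet]
  omega

/-- `σ` is a decreasing sequence of increasing runs, e.g. `789 456 123`. -/
def IsReverseLayered (σ : Equiv.Perm (Fin N)) : Prop :=
  ∀ i j, 1 ≤ i → i < j → j ≤ N → (pval σ i < pval σ j ↔ Disjoint (descSet σ) (Finset.Ico i j))

lemma pval_lt_of_disjoint_descSet {i j : ℕ} (hi : 1 ≤ i) (hij : i < j) (hj : j ≤ N)
    (h : Disjoint (descSet σ) (Finset.Ico i j)) : pval σ i < pval σ j := by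
  induction j, hij using Nat.le_induction with
  | base => exact (notMem_descSet hi hj).1 (Finset.disjoint_right.1 h (by simp))
  | succ j hij ih =>
    have hj' : j ∉ descSet σ := Finset.disjoint_right.1 h (by simp; omega)
    have := (notMem_descSet (σ := σ) (by omega) hj).1 hj'
    have := ih (by omega) (h.mono_right (Finset.Ico_subset_Ico_right (by omega)))
    omega

lemma pval_mem_Ioo_of_avoids (h132 : Avoids132 σ) (h213 : Avoids213 σ) {i m j : ℕ}
    (hi : 1 ≤ i) (him : i < m) (hmj : m < j) (hj : j ≤ N) (hlt : pval σ i < pval σ j) :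
    pval σ m ∈ Set.Ioo (pval σ i) (pval σ j) := by
  have hmi := (pval_inj σ (i := m) (by omega) (by omega) hi (by omega)).not.2 (by omega)
  have hmj' := (pval_inj σ (i := m) (by omega) (by omega) (by omega) hj).not.2 (by omega)
  constructor
  · by_contra h
    exact h213 ⟨i, m, j, hi, him, hmj, hj, by omega, hlt⟩
  · by_contra h
    exact h132 ⟨i, m, j, hi, him, hmj, hj, by omega, by omega⟩

lemma isReverseLayered_iff : IsReverseLayered σ ↔ Avoids132 σ ∧ Avoids213 σ := by
  constructor
  · intro hσ
    refine ⟨fun ⟨i, m, j, hi, him, hmj, hj, h1, h2⟩ => ?_,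
      fun ⟨i, m, j, hi, him, hmj, hj, h1, h2⟩ => ?_⟩
    · have := (hσ i j hi (by omega) hj).1 h1
      have := (hσ m j (by omega) hmj hj).2 (this.mono_right (Finset.Ico_subset_Ico_left him.le))
      omega
    · have := (hσ i j hi (by omega) hj).1 h2
      have := (hσ i m hi him (by omega)).2 (this.mono_right (Finset.Ico_subset_Ico_right hmj.le))
      omega
  · rintro ⟨h132, h213⟩ i j hi hij hj
    refine ⟨fun hlt => Finset.disjoint_right.2 fun d hd hdesc => ?_,
      pval_lt_of_disjoint_descSet hi hij hj⟩
    rw [Finset.mem_Ico] at hd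
    have hdj : pval σ d < pval σ j := by
      rcases hd.1.eq_or_lt with rfl | hid
      · exact hlt
      · exact (pval_mem_Ioo_of_avoids h132 h213 hi hid hd.2 hj hlt).2
    have : pval σ d < pval σ (d + 1) := by
      rcases (show d + 1 ≤ j by omega).eq_or_lt with hdj' | hdj'
      · rwa [hdj']
      · exact (pval_mem_Ioo_of_avoids h132 h213 (by omega) (Nat.lt_succ_self d) hdj' hj hdj).1
    exact (notMem_descSet (by omega) (by omega)).2 this hdesc

lemma eq_of_isReverseLayered (hσ : IsReverseLayered σ) (hτ : IsReverseLayered τ)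
    (h : descSet σ = descSet τ) : σ = τ := by
  refine perm_eq_of_lt_iff fun a b hab => ?_
  have := hσ (a + 1) (b + 1) (by omega) (by omega) b.isLt
  rw [h, ← hτ (a + 1) (b + 1) (by omega) (by omega) b.isLt] at this
  simpa only [pval_succ, add_lt_add_iff_right, Fin.val_fin_lt] using this

lemma card_filter_lt_eq_iff_disjoint (D : Finset ℕ) {i j : ℕ} (hij : i ≤ j) :
    (D.filter (· < i)).card = (D.filter (· < j)).card ↔ Disjoint D (Finset.Ico i j) := by
  have hsub : D.filter (· < i) ⊆ D.filter (· < j) :=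
    Finset.monotone_filter_right D fun _ _ h => by omega
  calc _ ↔ D.filter (· < i) = D.filter (· < j) :=
        ⟨fun h => Finset.eq_of_subset_of_card_le hsub h.ge, congrArg _⟩
    _ ↔ _ := by
      rw [Finset.filter_inj', Finset.disjoint_left]
      refine forall₂_congr fun d _ => ?_
      rw [Finset.mem_Ico]
      omega

/-- Sorting the positions by the key (block index, descending; position, ascending) realizes
the reverse-layered permutation whose runs are cut at the elements of `D`. -/
lemma exists_pval_lt_iff_disjoint (D : Finset ℕ) : ∃ σ : Equiv.Perm (Fin N),
    ∀ i j, 1 ≤ i → i < j → j ≤ N → (pval σ i < pval σ j ↔ Disjoint D (Finset.Ico i j)) := by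
  let key : Fin N → ℕᵒᵈ ×ₗ Fin N :=
    fun a => toLex (OrderDual.toDual (D.filter (· < (a : ℕ) + 1)).card, a)
  have hinj : Function.Injective key := fun a b h => congrArg (fun p => (ofLex p).2) h
  have hkey : StrictMono (key ∘ Tuple.sort key) :=
    (Tuple.monotone_sort key).strictMono_of_injective (hinj.comp (Tuple.sort key).injective)
  refine ⟨(Tuple.sort key)⁻¹, fun i j hi hij hj => ?_⟩
  have hblk : (D.filter (· < i)).card ≤ (D.filter (· < j)).card :=
    Finset.card_le_card (Finset.monotone_filter_right D fun _ _ h => by omega)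
  rw [pval_eq _ hi (by omega), pval_eq _ (by omega) hj, add_lt_add_iff_right, Fin.val_fin_lt,
    ← hkey.lt_iff_lt, ← card_filter_lt_eq_iff_disjoint D hij.le]
  simp only [Function.comp_apply, Equiv.Perm.coe_inv, Equiv.apply_symm_apply, key,
    Prod.Lex.toLex_lt_toLex, OrderDual.toDual_lt_toDual, OrderDual.toDual_inj, Fin.mk_lt_mk,
    Nat.sub_add_cancel hi, Nat.sub_add_cancel (hi.trans hij.le)]
  omega

lemma exists_isReverseLayered_descSet_eq {D : Finset ℕ} (hD : D ⊆ Finset.Icc 1 (N - 1)) :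
    ∃ σ : Equiv.Perm (Fin N), IsReverseLayered σ ∧ descSet σ = D := by
  obtain ⟨σ, hσ⟩ := exists_pval_lt_iff_disjoint (N := N) D
  have hdesc : descSet σ = D := by
    ext d
    by_cases hd : 1 ≤ d ∧ d + 1 ≤ N
    · rw [← not_iff_not, notMem_descSet hd.1 hd.2, hσ d (d + 1) hd.1 (by omega) hd.2,
        Nat.Ico_succ_singleton, Finset.disjoint_singleton_right]
    · refine iff_of_false (fun h => hd ?_) (fun h => hd ?_)
      · exact ⟨(mem_descSet.1 h).1, (mem_descSet.1 h).2.1⟩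
      · have := Finset.mem_Icc.1 (hD h)
        omega
  exact ⟨σ, fun i j hi hij hj => hdesc ▸ hσ i j hi hij hj, hdesc⟩

def reverseComplement (σ : Equiv.Perm (Fin N)) : Equiv.Perm (Fin N) :=
  (Fin.revPerm.trans σ).trans Fin.revPerm

lemma pval_reverseComplement (σ : Equiv.Perm (Fin N)) {i : ℕ} (h1 : 1 ≤ i) (h2 : i ≤ N) :
    pval (reverseComplement σ) i = N + 1 - pval σ (N + 1 - i) := by
  rw [pval_eq _ h1 h2, pval_eq _ (by omega) (by omega)]
  have : Fin.rev ⟨i - 1, by omega⟩ = (⟨N + 1 - i - 1, by omega⟩ : Fin N) := Fin.ext (by simp; omega)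
  simp only [reverseComplement, Equiv.trans_apply, Fin.revPerm_apply, Fin.val_rev, this]
  omega

lemma isCentro_iff_reverseComplement_eq : IsCentro σ ↔ reverseComplement σ = σ := by
  constructor
  · intro h
    refine Equiv.ext fun a => Fin.ext ?_
    have := pval_reverseComplement σ (i := a + 1) (by omega) a.isLt
    have := h (a + 1) (by omega) a.isLt
    have := pval_le σ (i := N + 1 - (a + 1)) (by omega) (by omega)
    simp only [pval_succ] at *
    omega
  · intro h i h1 h2
    have := pval_reverseComplement σ h1 h2
    have := pval_pos σ (i := N + 1 - i) (by omega) (by omega)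
    have := pval_le σ (i := N + 1 - i) (by omega) (by omega)
    rw [h] at *
    omega

lemma pval_reverseComplement_lt_iff {i j : ℕ} (hi : 1 ≤ i) (hi' : i ≤ N) (hj : 1 ≤ j)
    (hj' : j ≤ N) : pval (reverseComplement σ) i < pval (reverseComplement σ) j ↔
      pval σ (N + 1 - j) < pval σ (N + 1 - i) := by
  have := pval_le σ (i := N + 1 - i) (by omega) (by omega)
  have := pval_le σ (i := N + 1 - j) (by omega) (by omega)
  rw [pval_reverseComplement σ hi hi', pval_reverseComplement σ hj hj']
  omega

lemma avoids213_reverseComplement (h : Avoids132 σ) : Avoids213 (reverseComplement σ) := by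
  rintro ⟨i, j, k, hi, hij, hjk, hk, h1, h2⟩
  rw [pval_reverseComplement_lt_iff (by omega) (by omega) (by omega) (by omega)] at h1 h2
  exact h ⟨N + 1 - k, N + 1 - j, N + 1 - i, by omega, by omega, by omega, by omega, h2, h1⟩

lemma avoids132_reverseComplement (h : Avoids213 σ) : Avoids132 (reverseComplement σ) := by
  rintro ⟨i, j, k, hi, hij, hjk, hk, h1, h2⟩
  rw [pval_reverseComplement_lt_iff (by omega) (by omega) (by omega) (by omega)] at h1 h2
  exact h ⟨N + 1 - k, N + 1 - j, N + 1 - i, by omega, by omega, by omega, by omega, h2, h1⟩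

lemma mem_descSet_reverseComplement {d : ℕ} :
    d ∈ descSet (reverseComplement σ) ↔ N - d ∈ descSet σ := by
  rw [mem_descSet, mem_descSet]
  constructor
  · rintro ⟨h1, h2, h3⟩
    rw [pval_reverseComplement_lt_iff (by omega) h2 h1 (by omega), show N + 1 - (d + 1) = N - d by
      omega] at h3
    exact ⟨by omega, by omega, by rwa [show N - d + 1 = N + 1 - d by omega]⟩
  · rintro ⟨h1, h2, h3⟩
    refine ⟨by omega, by omega, ?_⟩
    rwa [pval_reverseComplement_lt_iff (by omega) (by omega) (by omega) (by omega),
      show N + 1 - (d + 1) = N - d by omega, ← show N - d + 1 = N + 1 - d by omega]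

lemma isCentro_and_avoids132_iff : IsCentro σ ∧ Avoids132 σ ↔
    IsReverseLayered σ ∧ ∀ d ∈ descSet σ, N - d ∈ descSet σ := by
  constructor
  · rintro ⟨hc, h132⟩
    rw [isCentro_iff_reverseComplement_eq] at hc
    have h213 : Avoids213 σ := hc ▸ avoids213_reverseComplement h132
    exact ⟨isReverseLayered_iff.2 ⟨h132, h213⟩, fun d hd =>
      mem_descSet_reverseComplement.1 (hc.symm ▸ hd)⟩
  · rintro ⟨hσ, hsymm⟩
    obtain ⟨h132, h213⟩ := isReverseLayered_iff.1 hσ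
    have hrc : IsReverseLayered (reverseComplement σ) := isReverseLayered_iff.2
      ⟨avoids132_reverseComplement h213, avoids213_reverseComplement h132⟩
    refine ⟨isCentro_iff_reverseComplement_eq.2 (eq_of_isReverseLayered hrc hσ ?_), h132⟩
    ext d
    rw [mem_descSet_reverseComplement]
    refine ⟨fun hd => ?_, hsymm d⟩
    have := (mem_descSet.1 hd).1
    simpa only [show N - (N - d) = d by omega] using hsymm _ hd

lemma card_isCentro_avoids132_des_eq (N k : ℕ) :
    Nat.card {σ : Equiv.Perm (Fin N) // IsCentro σ ∧ Avoids132 σ ∧ des σ = k} =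
      Nat.card {D : Finset ℕ // D ⊆ Finset.Icc 1 (N - 1) ∧ (∀ d ∈ D, N - d ∈ D) ∧ D.card = k} := by
  have hchar (σ : {σ : Equiv.Perm (Fin N) // IsCentro σ ∧ Avoids132 σ ∧ des σ = k}) :=
    isCentro_and_avoids132_iff.1 ⟨σ.2.1, σ.2.2.1⟩
  refine Nat.card_congr (Equiv.ofBijective (fun σ => ⟨descSet σ.1, descSet_subset _, (hchar σ).2,
    des_eq_card_descSet σ.1 ▸ σ.2.2.2⟩) ⟨fun σ τ h => ?_, ?_⟩)
  · exact Subtype.ext <| eq_of_isReverseLayered (hchar σ).1 (hchar τ).1 (congrArg Subtype.val h)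
  · rintro ⟨D, hD, hsymm, hcard⟩
    obtain ⟨σ, hσ, rfl⟩ := exists_isReverseLayered_descSet_eq hD
    obtain ⟨hc, h132⟩ := isCentro_and_avoids132_iff.2 ⟨hσ, hsymm⟩
    exact ⟨⟨σ, hc, h132, (des_eq_card_descSet σ).trans hcard⟩, rfl⟩

section SymmetricSubsets

variable {n : ℕ} {D : Finset ℕ}

lemma card_eq_of_symmetric (hD : D ⊆ Finset.Icc 1 (2 * n - 1)) (hsymm : ∀ d ∈ D, 2 * n - d ∈ D) :
    D.card = 2 * (D.filter (· < n)).card + if n ∈ D then 1 else 0 := by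
  have hmem : ∀ d ∈ D, 1 ≤ d ∧ d ≤ 2 * n - 1 := fun d hd => Finset.mem_Icc.1 (hD hd)
  have hgt : (D.filter (n < ·)).card = (D.filter (· < n)).card := by
    refine Finset.card_bij' (fun d _ => 2 * n - d) (fun d _ => 2 * n - d) ?_ ?_ ?_ ?_ <;>
      intro d hd <;> rw [Finset.mem_filter] at hd <;> have := hmem d hd.1
    · exact Finset.mem_filter.2 ⟨hsymm d hd.1, by omega⟩
    · exact Finset.mem_filter.2 ⟨hsymm d hd.1, by omega⟩
    · omega
    · omega
  have hlt := Finset.card_filter_add_card_filter_not (s := D) (· < n)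
  have hge := Finset.card_filter_add_card_filter_not (s := D.filter (¬ · < n)) (n < ·)
  have e1 : (D.filter (¬ · < n)).filter (n < ·) = D.filter (n < ·) := by
    rw [Finset.filter_filter]; exact Finset.filter_congr fun d _ => by omega
  have e2 : (D.filter (¬ · < n)).filter (¬ n < ·) = D.filter (· = n) := by
    rw [Finset.filter_filter]; exact Finset.filter_congr fun d _ => by omega
  rw [e1, e2, Finset.filter_eq'] at hge
  split_ifs at hge ⊢ <;> simp only [Finset.card_singleton, Finset.card_empty] at hge <;> omega

def symmetrize (n : ℕ) (T : Finset ℕ) (b : Bool) : Finset ℕ :=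
  (Finset.Icc 1 (2 * n - 1)).filter fun d => d ∈ T ∨ 2 * n - d ∈ T ∨ (d = n ∧ b)

variable {T : Finset ℕ} {b : Bool}

lemma symmetrize_subset : symmetrize n T b ⊆ Finset.Icc 1 (2 * n - 1) :=
  Finset.filter_subset _ _

lemma symmetrize_symm {d : ℕ} (hd : d ∈ symmetrize n T b) : 2 * n - d ∈ symmetrize n T b := by
  simp only [symmetrize, Finset.mem_filter, Finset.mem_Icc] at hd ⊢
  grind

lemma filter_lt_symmetrize (hT : T ⊆ Finset.Icc 1 (n - 1)) :
    (symmetrize n T b).filter (· < n) = T := by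
  ext d
  have := @hT d
  have := @hT (2 * n - d)
  simp only [symmetrize, Finset.mem_filter, Finset.mem_Icc] at *
  grind

lemma mem_symmetrize_self (hn : 1 ≤ n) (hT : T ⊆ Finset.Icc 1 (n - 1)) :
    n ∈ symmetrize n T b ↔ b := by
  have := @hT n
  simp only [symmetrize, Finset.mem_filter, Finset.mem_Icc] at *
  grind

lemma card_symmetrize (hn : 1 ≤ n) (hT : T ⊆ Finset.Icc 1 (n - 1)) :
    (symmetrize n T b).card = 2 * T.card + if b then 1 else 0 := by
  rw [card_eq_of_symmetric symmetrize_subset fun _ => symmetrize_symm, filter_lt_symmetrize hT]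
  simp only [mem_symmetrize_self hn hT]

lemma symmetrize_filter_lt (hD : D ⊆ Finset.Icc 1 (2 * n - 1))
    (hsymm : ∀ d ∈ D, 2 * n - d ∈ D) : symmetrize n (D.filter (· < n)) (n ∈ D) = D := by
  ext d
  have := @hD d
  have := hsymm d
  have := hsymm (2 * n - d)
  simp only [symmetrize, Finset.mem_filter, Finset.mem_Icc] at *
  grind

lemma card_symmetric_subsets_eq_choose (n k : ℕ) (hn : 1 ≤ n) :
    Nat.card {D : Finset ℕ // D ⊆ Finset.Icc 1 (2 * n - 1) ∧ (∀ d ∈ D, 2 * n - d ∈ D) ∧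
      D.card = k} = (n - 1).choose (k / 2) := by
  have hfilter : ∀ {D : Finset ℕ}, D ⊆ Finset.Icc 1 (2 * n - 1) →
      D.filter (· < n) ⊆ Finset.Icc 1 (n - 1) := fun hD d hd => by
    have := Finset.mem_Icc.1 (hD (Finset.mem_of_mem_filter d hd))
    have := (Finset.mem_filter.1 hd).2
    exact Finset.mem_Icc.2 (by omega)
  let e : {D : Finset ℕ // D ⊆ Finset.Icc 1 (2 * n - 1) ∧ (∀ d ∈ D, 2 * n - d ∈ D) ∧
      D.card = k} ≃ Finset.powersetCard (k / 2) (Finset.Icc 1 (n - 1)) :=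
    { toFun := fun D => ⟨D.1.filter (· < n), Finset.mem_powersetCard.2 ⟨hfilter D.2.1, by
        have := card_eq_of_symmetric D.2.1 D.2.2.1
        split_ifs at this <;> omega⟩⟩
      invFun := fun T => ⟨symmetrize n T.1 (k % 2 = 1), symmetrize_subset,
        fun _ => symmetrize_symm, by
          obtain ⟨hT, hcard⟩ := Finset.mem_powersetCard.1 T.2
          rw [card_symmetrize hn hT, hcard]
          split_ifs with h <;> simp only [decide_eq_true_eq] at h <;> omega⟩
      left_inv := fun ⟨D, hD, hsymm, hcard⟩ => Subtype.ext <| by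
        have hodd : k % 2 = 1 ↔ n ∈ D := by
          have := card_eq_of_symmetric hD hsymm
          split_ifs at this with h <;> simp only [h, iff_true, iff_false] <;> omega
        simpa only [hodd] using symmetrize_filter_lt hD hsymm
      right_inv := fun T => Subtype.ext
        (filter_lt_symmetrize (Finset.mem_powersetCard.1 T.2).1) }
  rw [Nat.card_congr e, Nat.card_eq_fintype_card, Fintype.card_coe, Finset.card_powersetCard,
    Nat.card_Icc, Nat.add_sub_cancel]

end SymmetricSubsets

end CentrosymmetricAvoid132

/-- For every `n ≥ 1` and `k ≥ 0`, the number of centrosymmetric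
132-avoiding permutations of `{1,…,2n}` with exactly `k` descents is `C(n−1, ⌊k/2⌋)`. -/
theorem stmt0 (n k : ℕ) (hn : 1 ≤ n) :
    Nat.card {σ : Equiv.Perm (Fin (2 * n)) // IsCentro σ ∧ Avoids132 σ ∧ des σ = k}
      = Nat.choose (n - 1) (k / 2) := by
  rw [CentrosymmetricAvoid132.card_isCentro_avoids132_des_eq,
    CentrosymmetricAvoid132.card_symmetric_subsets_eq_choose n k hn]
end

section
/- For every n ≥ 1 and every k ≥ 0, the number of centrosymmetric 132-avoiding permutations of {1,…,2n+1} having exactly k descents equals C(n, k/2) if k is even, and equals 0 if k is odd. -/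
/-!
A centrosymmetric permutation avoids 132 iff it also avoids 213, since reverse-complementation
exchanges the two patterns. A permutation avoiding both is reverse-layered: it increases by one
inside each block between consecutive descents, and the blocks carry decreasing ranges of values.
So it is determined by its descent set, every subset of `[1, N - 1]` occurs, and centrosymmetry
means that the descent set is invariant under `c ↦ N - c`. For `N = 2n + 1` this involution of
`[1, 2n]` is fixed-point free, so a symmetric descent set is determined by its part `S ⊆ [1, n]`,
which is arbitrary, and it has `2 |S|` elements.
-/

theorem Equiv.Perm.eq_of_lt_iff_lt {α : Type*} [LinearOrder α] [Finite α] {σ τ : Equiv.Perm α}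
    (h : ∀ i j, σ i < σ j ↔ τ i < τ j) : σ = τ := by
  ext x
  have hmono : StrictMono (τ ∘ σ.symm) := fun a b hab => (h _ _).1 (by simpa using hab)
  simpa using (hmono.apply_eq (x := σ x)).symm

namespace CentroAvoid

open Finset

/-- Positions are 1-indexed as in `pval`; a cut `c` separates positions `c` and `c + 1`. -/
def HasCut (C : Finset ℕ) (p q : ℕ) : Prop := ∃ c ∈ C, p ≤ c ∧ c < q

def descentSet (N : ℕ) (f : ℕ → ℕ) : Finset ℕ := {i ∈ Icc 1 (N - 1) | f (i + 1) < f i}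

/-- `f` is reverse-layered along `C` on `[1, N]`. -/
def OrderedByCuts (C : Finset ℕ) (N : ℕ) (f : ℕ → ℕ) : Prop :=
  ∀ p q, 1 ≤ p → p < q → q ≤ N → (HasCut C p q → f q < f p) ∧ (¬ HasCut C p q → f p < f q)

namespace OrderedByCuts

variable {C : Finset ℕ} {N : ℕ} {f g : ℕ → ℕ}

lemma lt_iff_hasCut (hf : OrderedByCuts C N f) {p q : ℕ} (hp : 1 ≤ p) (hpq : p < q)
    (hq : q ≤ N) : f q < f p ↔ HasCut C p q := by
  obtain ⟨hcut, hno⟩ := hf p q hp hpq hq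
  by_cases h : HasCut C p q
  · simp [h, hcut h]
  · simp [h, (hno h).le]

lemma lt_iff_not_hasCut (hf : OrderedByCuts C N f) {p q : ℕ} (hp : 1 ≤ p) (hpq : p < q)
    (hq : q ≤ N) : f p < f q ↔ ¬ HasCut C p q := by
  obtain ⟨hcut, hno⟩ := hf p q hp hpq hq
  by_cases h : HasCut C p q
  · simp [h, (hcut h).le]
  · simp [h, hno h]

lemma lt_iff_lt (hf : OrderedByCuts C N f) (hg : OrderedByCuts C N g) {p q : ℕ}
    (hp1 : 1 ≤ p) (hp2 : p ≤ N) (hq1 : 1 ≤ q) (hq2 : q ≤ N) : f p < f q ↔ g p < g q := by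
  rcases lt_trichotomy p q with hpq | rfl | hqp
  · rw [hf.lt_iff_not_hasCut hp1 hpq hq2, hg.lt_iff_not_hasCut hp1 hpq hq2]
  · simp
  · rw [hf.lt_iff_hasCut hq1 hqp hp2, hg.lt_iff_hasCut hq1 hqp hp2]

lemma descentSet_eq (hf : OrderedByCuts C N f) (hC : C ⊆ Icc 1 (N - 1)) :
    descentSet N f = C := by
  ext c
  simp only [descentSet, mem_filter, mem_Icc]
  constructor
  · rintro ⟨hc, hlt⟩
    obtain ⟨c', hc', h1, h2⟩ := (hf.lt_iff_hasCut hc.1 (Nat.lt_succ_self c) (by omega)).1 hlt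
    rwa [show c = c' by omega]
  · intro hc
    have hc' := mem_Icc.1 (hC hc)
    exact ⟨hc', (hf.lt_iff_hasCut hc'.1 (Nat.lt_succ_self c) (by omega)).2
      ⟨c, hc, le_rfl, Nat.lt_succ_self c⟩⟩

lemma injOn (hf : OrderedByCuts C N f) : Set.InjOn f (Set.Icc 1 N) := by
  intro p ⟨hp1, hp2⟩ q ⟨hq1, hq2⟩ h
  by_contra hne
  rcases Nat.lt_or_gt_of_ne hne with hpq | hqp
  · obtain ⟨hcut, hno⟩ := hf p q hp1 hpq hq2
    by_cases hc : HasCut C p q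
    · exact (hcut hc).ne' h
    · exact (hno hc).ne h
  · obtain ⟨hcut, hno⟩ := hf q p hq1 hqp hp2
    by_cases hc : HasCut C q p
    · exact (hcut hc).ne h
    · exact (hno hc).ne' h

end OrderedByCuts

lemma hasCut_reflect_iff {C : Finset ℕ} {N p q : ℕ} (hC : ∀ c ∈ C, N - c ∈ C) (hp : 1 ≤ p)
    (hq : q ≤ N) : HasCut C (N + 1 - q) (N + 1 - p) ↔ HasCut C p q := by
  constructor
  · rintro ⟨c, hc, h1, h2⟩
    exact ⟨N - c, hC c hc, by omega, by omega⟩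
  · rintro ⟨c, hc, h1, h2⟩
    exact ⟨N - c, hC c hc, by omega, by omega⟩

section Values

variable {N : ℕ} (σ : Equiv.Perm (Fin N))

lemma pval_of_mem {i : ℕ} (h1 : 1 ≤ i) (h2 : i ≤ N) :
    pval σ i = σ ⟨i - 1, by omega⟩ + 1 := by
  simp [pval, show i - 1 < N by omega]

lemma pval_le (i : ℕ) : pval σ i ≤ N := by
  unfold pval
  split
  · next h => have := (σ ⟨i - 1, h⟩).isLt; omega
  · omega

lemma pval_succ_lt_pval_succ_iff (i j : Fin N) :
    pval σ (i + 1) < pval σ (j + 1) ↔ σ i < σ j := by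
  rw [pval_of_mem σ (by omega) (by omega), pval_of_mem σ (by omega) (by omega)]
  simp only [Nat.add_sub_cancel, Fin.eta, Nat.add_lt_add_iff_right, Fin.val_fin_lt]

lemma pval_injOn {i j : ℕ} (hi1 : 1 ≤ i) (hi2 : i ≤ N) (hj1 : 1 ≤ j) (hj2 : j ≤ N)
    (h : pval σ i = pval σ j) : i = j := by
  rw [pval_of_mem σ hi1 hi2, pval_of_mem σ hj1 hj2, Nat.add_right_cancel_iff,
    Fin.val_inj, σ.apply_eq_iff_eq, Fin.mk.injEq] at h
  omega

lemma des_eq_card_descentSet : des σ = #(descentSet N (pval σ)) := by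
  rw [des, ← Nat.card_eq_finsetCard]
  exact Nat.card_congr (Equiv.subtypeEquivRight fun i => by
    simp only [descentSet, mem_filter, mem_Icc]
    omega)

lemma eq_of_orderedByCuts {C : Finset ℕ} {σ τ : Equiv.Perm (Fin N)}
    (hσ : OrderedByCuts C N (pval σ)) (hτ : OrderedByCuts C N (pval τ)) : σ = τ :=
  Equiv.Perm.eq_of_lt_iff_lt fun i j => by
    rw [← pval_succ_lt_pval_succ_iff, ← pval_succ_lt_pval_succ_iff]
    exact hσ.lt_iff_lt hτ (by omega) (by omega) (by omega) (by omega)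

lemma avoids132_of_orderedByCuts {C : Finset ℕ} (hσ : OrderedByCuts C N (pval σ)) :
    Avoids132 σ := by
  rintro ⟨i, j, k, hi, hij, hjk, hk, hik, hkj⟩
  obtain ⟨c, hc, hjc, hck⟩ := (hσ.lt_iff_hasCut (by omega) hjk hk).1 hkj
  have := (hσ.lt_iff_hasCut hi (hij.trans hjk) hk).2 ⟨c, hc, by omega, hck⟩
  omega

lemma pval_revPerm_mul_mul_revPerm {i : ℕ} (h1 : 1 ≤ i) (h2 : i ≤ N) :
    pval (Fin.revPerm * σ * Fin.revPerm) i = N + 1 - pval σ (N + 1 - i) := by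
  rw [pval_of_mem _ h1 h2, pval_of_mem σ (by omega) (by omega)]
  simp only [Equiv.Perm.mul_apply, Fin.revPerm_apply, Fin.val_rev]
  have := (σ (Fin.rev ⟨i - 1, by omega⟩)).isLt
  have hrev : Fin.rev (⟨i - 1, by omega⟩ : Fin N) = ⟨N + 1 - i - 1, by omega⟩ :=
    Fin.ext (by simp only [Fin.val_rev]; omega)
  rw [hrev] at this ⊢
  omega

/-- The reverse-complement of `σ` is ordered by the reflected cuts, so by uniqueness it is `σ`
itself when the cuts are symmetric. -/
lemma isCentro_of_orderedByCuts {C : Finset ℕ} (hσ : OrderedByCuts C N (pval σ))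
    (hC : ∀ c ∈ C, N - c ∈ C) : IsCentro σ := by
  have hτ : OrderedByCuts C N (pval (Fin.revPerm * σ * Fin.revPerm)) := by
    intro p q hp hpq hq
    rw [pval_revPerm_mul_mul_revPerm σ hp (by omega), pval_revPerm_mul_mul_revPerm σ (by omega) hq,
      ← hasCut_reflect_iff hC hp hq]
    obtain ⟨hcut, hno⟩ := hσ (N + 1 - q) (N + 1 - p) (by omega) (by omega) (by omega)
    have := pval_le σ (N + 1 - p)
    have := pval_le σ (N + 1 - q)
    exact ⟨fun h => by have := hcut h; omega, fun h => by have := hno h; omega⟩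
  intro i hi1 hi2
  have h := pval_revPerm_mul_mul_revPerm σ hi1 hi2
  rw [eq_of_orderedByCuts hτ hσ] at h
  have := pval_le σ (N + 1 - i)
  omega

def Avoids213 : Prop :=
  ¬ ∃ i j k, 1 ≤ i ∧ i < j ∧ j < k ∧ k ≤ N ∧ pval σ j < pval σ i ∧ pval σ i < pval σ k

variable {σ}

lemma avoids213_of_isCentro (hc : IsCentro σ) (h132 : Avoids132 σ) : Avoids213 σ := by
  rintro ⟨i, j, k, hi, hij, hjk, hk, hji, hik⟩
  have hi' := hc i hi (by omega)
  have hj' := hc j (by omega) (by omega)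
  have hk' := hc k (by omega) hk
  exact h132 ⟨N + 1 - k, N + 1 - j, N + 1 - i, by omega, by omega, by omega, by omega,
    by omega, by omega⟩

lemma sub_mem_descentSet (hc : IsCentro σ) {c : ℕ} (hcD : c ∈ descentSet N (pval σ)) :
    N - c ∈ descentSet N (pval σ) := by
  simp only [descentSet, mem_filter, mem_Icc] at hcD ⊢
  have h1 := hc c (by omega) (by omega)
  have h2 := hc (c + 1) (by omega) (by omega)
  rw [show N + 1 - (c + 1) = N - c by omega] at h2
  rw [show N - c + 1 = N + 1 - c by omega]
  omega

lemma le_of_not_hasCut_descentSet (f : ℕ → ℕ) {p q : ℕ} (hp : 1 ≤ p) (hpq : p ≤ q)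
    (hq : q ≤ N) (h : ¬ HasCut (descentSet N f) p q) : f p ≤ f q := by
  induction q, hpq using Nat.le_induction with
  | base => exact le_rfl
  | succ q hpq ih =>
    have hq_mem : q ∉ descentSet N f := fun hmem => h ⟨q, hmem, hpq, Nat.lt_succ_self q⟩
    simp only [descentSet, mem_filter, mem_Icc, not_and, not_lt] at hq_mem
    exact (ih (by omega) fun ⟨c, hc, h1, h2⟩ => h ⟨c, hc, h1, by omega⟩).trans
      (hq_mem ⟨by omega, by omega⟩)

/-- Below a descent at `c`, avoiding 213 forces every later value under `σ c`, and avoiding 132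
then forces it under every earlier value too. -/
lemma lt_of_hasCut_descentSet (h132 : Avoids132 σ) (h213 : Avoids213 σ) {p q : ℕ} (hp : 1 ≤ p)
    (hq : q ≤ N) (h : HasCut (descentSet N (pval σ)) p q) : pval σ q < pval σ p := by
  obtain ⟨c, hc, hpc, hcq⟩ := h
  simp only [descentSet, mem_filter, mem_Icc] at hc
  obtain ⟨⟨hc1, hcN⟩, hdesc⟩ := hc
  have hqc : pval σ q < pval σ c := by
    rcases (Nat.succ_le_of_lt hcq).eq_or_lt with rfl | hcq'
    · exact hdesc
    · by_contra hle
      have hne := mt (pval_injOn σ hc1 (by omega) (by omega) hq) (by omega)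
      exact h213 ⟨c, c + 1, q, hc1, Nat.lt_succ_self c, hcq', hq, hdesc, by omega⟩
  rcases hpc.eq_or_lt with rfl | hpc'
  · exact hqc
  · by_contra hle
    have hne := mt (pval_injOn σ hp (by omega) (by omega) hq) (by omega)
    exact h132 ⟨p, c, q, hp, hpc', hcq, hq, by omega, hqc⟩

lemma orderedByCuts_descentSet (h132 : Avoids132 σ) (h213 : Avoids213 σ) :
    OrderedByCuts (descentSet N (pval σ)) N (pval σ) := fun p q hp hpq hq =>
  ⟨lt_of_hasCut_descentSet h132 h213 hp hq, fun h =>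
    lt_of_le_of_ne (le_of_not_hasCut_descentSet _ hp hpq.le hq h)
      (mt (pval_injOn σ hp (by omega) (by omega) hq) hpq.ne)⟩

end Values

section Layered

variable (C : Finset ℕ) (N : ℕ)

def blockStart (i : ℕ) : ℕ := (insert 0 {c ∈ C | c < i}).max' (insert_nonempty _ _)

def blockEnd (i : ℕ) : ℕ := (insert N {c ∈ C | i ≤ c}).min' (insert_nonempty _ _)

/-- The block `(blockStart C i, blockEnd C N i]` containing position `i` carries the values
`N - blockEnd C N i + 1, …, N - blockStart C i` in increasing order. -/
def layered (i : ℕ) : ℕ := N - blockEnd C N i + (i - blockStart C i)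

variable {C N} {i c : ℕ}

lemma blockStart_lt (hi : 1 ≤ i) : blockStart C i < i := by
  refine (max'_lt_iff _ _).2 fun c hc => ?_
  rcases mem_insert.1 hc with rfl | hc
  · omega
  · exact (mem_filter.1 hc).2

lemma le_blockStart (hc : c ∈ C) (hci : c < i) : c ≤ blockStart C i :=
  le_max' _ _ (mem_insert_of_mem (mem_filter.2 ⟨hc, hci⟩))

lemma blockStart_eq_zero_or_mem : blockStart C i = 0 ∨ blockStart C i ∈ C := by
  rcases mem_insert.1 (max'_mem (insert 0 {c ∈ C | c < i}) (insert_nonempty _ _)) with h | h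
  · exact .inl h
  · exact .inr (mem_filter.1 h).1

lemma le_blockEnd (hi : i ≤ N) : i ≤ blockEnd C N i := by
  refine le_min' _ _ _ fun c hc => ?_
  rcases mem_insert.1 hc with rfl | hc
  · exact hi
  · exact (mem_filter.1 hc).2

lemma blockEnd_le_self : blockEnd C N i ≤ N :=
  min'_le _ _ (mem_insert_self _ _)

lemma blockEnd_le (hc : c ∈ C) (hic : i ≤ c) : blockEnd C N i ≤ c :=
  min'_le _ _ (mem_insert_of_mem (mem_filter.2 ⟨hc, hic⟩))

lemma blockEnd_eq_self_or_mem : blockEnd C N i = N ∨ blockEnd C N i ∈ C := by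
  rcases mem_insert.1 (min'_mem (insert N {c ∈ C | i ≤ c}) (insert_nonempty _ _)) with h | h
  · exact .inl h
  · exact .inr (mem_filter.1 h).1

lemma layered_mem_Icc (hi1 : 1 ≤ i) (hi2 : i ≤ N) : layered C N i ∈ Icc 1 N := by
  have := blockStart_lt (C := C) hi1
  have := le_blockEnd (C := C) hi2
  have := blockEnd_le_self (C := C) (N := N) (i := i)
  simp only [layered, mem_Icc]
  omega

variable {p q : ℕ}

lemma blockStart_eq_of_not_hasCut (hp : 1 ≤ p) (hpq : p ≤ q) (h : ¬ HasCut C p q) :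
    blockStart C q = blockStart C p := by
  apply le_antisymm
  · rcases blockStart_eq_zero_or_mem (C := C) (i := q) with h0 | hmem
    · omega
    · have hlt : blockStart C q < p := by
        by_contra hge
        exact h ⟨_, hmem, by omega, blockStart_lt (by omega)⟩
      exact le_blockStart hmem hlt
  · rcases blockStart_eq_zero_or_mem (C := C) (i := p) with h0 | hmem
    · omega
    · exact le_blockStart hmem ((blockStart_lt hp).trans_le hpq)

lemma blockEnd_eq_of_not_hasCut (hpq : p ≤ q) (hq : q ≤ N) (h : ¬ HasCut C p q) :
    blockEnd C N q = blockEnd C N p := by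
  apply le_antisymm
  · rcases blockEnd_eq_self_or_mem (C := C) (N := N) (i := p) with hN | hmem
    · rw [hN]; exact blockEnd_le_self
    · have hle : q ≤ blockEnd C N p := by
        by_contra hlt
        exact h ⟨_, hmem, (le_blockEnd (hpq.trans hq)), by omega⟩
      exact blockEnd_le hmem hle
  · rcases blockEnd_eq_self_or_mem (C := C) (N := N) (i := q) with hN | hmem
    · rw [hN]; exact blockEnd_le_self
    · exact blockEnd_le hmem (hpq.trans (le_blockEnd hq))

lemma layered_lt_of_hasCut (hp : 1 ≤ p) (hpq : p < q) (hq : q ≤ N) (h : HasCut C p q) :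
    layered C N q < layered C N p := by
  obtain ⟨c, hc, hpc, hcq⟩ := h
  have hbp : blockEnd C N p ∈ C :=
    (blockEnd_eq_self_or_mem (C := C) (N := N) (i := p)).resolve_left
      (by have := blockEnd_le (N := N) hc hpc; omega)
  have := le_blockStart hbp ((blockEnd_le (N := N) hc hpc).trans_lt hcq)
  have := blockStart_lt (C := C) hp
  have := blockStart_lt (C := C) (i := q) (by omega)
  have := le_blockEnd (C := C) (hpq.le.trans hq)
  have := le_blockEnd (C := C) hq
  have := blockEnd_le_self (C := C) (N := N) (i := q)
  simp only [layered]
  omega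

lemma layered_lt_of_not_hasCut (hp : 1 ≤ p) (hpq : p < q) (hq : q ≤ N) (h : ¬ HasCut C p q) :
    layered C N p < layered C N q := by
  have := blockStart_lt (C := C) hp
  have := le_blockEnd (C := C) hq
  have := blockEnd_le_self (C := C) (N := N) (i := q)
  simp only [layered, blockStart_eq_of_not_hasCut hp hpq.le h,
    blockEnd_eq_of_not_hasCut hpq.le hq h]
  omega

lemma orderedByCuts_layered : OrderedByCuts C N (layered C N) := fun _ _ hp hpq hq =>
  ⟨layered_lt_of_hasCut hp hpq hq, layered_lt_of_not_hasCut hp hpq hq⟩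

variable (C N) in
noncomputable def layeredPerm : Equiv.Perm (Fin N) :=
  Equiv.ofBijective
    (fun i => ⟨layered C N (i + 1) - 1, by
      have := mem_Icc.1 (layered_mem_Icc (C := C) (Nat.le_add_left 1 i) i.isLt); omega⟩)
    (Finite.injective_iff_bijective.1 fun i j h => by
      have hi := mem_Icc.1 (layered_mem_Icc (C := C) (Nat.le_add_left 1 i) i.isLt)
      have hj := mem_Icc.1 (layered_mem_Icc (C := C) (Nat.le_add_left 1 j) j.isLt)
      have := orderedByCuts_layered.injOn ⟨Nat.le_add_left 1 i, i.isLt⟩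
        ⟨Nat.le_add_left 1 j, j.isLt⟩ (show layered C N (i + 1) = layered C N (j + 1) by
          have := congrArg Fin.val h; dsimp only at this; omega)
      exact Fin.ext (by omega))

lemma pval_layeredPerm (hi1 : 1 ≤ i) (hi2 : i ≤ N) : pval (layeredPerm C N) i = layered C N i := by
  have := mem_Icc.1 (layered_mem_Icc (C := C) hi1 hi2)
  rw [pval_of_mem _ hi1 hi2]
  simp only [layeredPerm, Equiv.ofBijective_apply, show i - 1 + 1 = i by omega]
  omega

lemma orderedByCuts_layeredPerm : OrderedByCuts C N (pval (layeredPerm C N)) := by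
  intro p q hp hpq hq
  rw [pval_layeredPerm hp (hpq.le.trans hq), pval_layeredPerm (hp.trans hpq.le) hq]
  exact orderedByCuts_layered p q hp hpq hq

lemma descentSet_layeredPerm (hC : C ⊆ Icc 1 (N - 1)) :
    descentSet N (pval (layeredPerm C N)) = C :=
  orderedByCuts_layeredPerm.descentSet_eq hC

end Layered

section SymmetricCuts

variable (n : ℕ) (S : Finset (Fin n))

def symmCuts : Finset ℕ :=
  S.image (fun s : Fin n => (s : ℕ) + 1) ∪ S.image (fun s : Fin n => 2 * n - s)

variable {n S}

lemma mem_symmCuts {c : ℕ} : c ∈ symmCuts n S ↔ ∃ s ∈ S, c = s + 1 ∨ c = 2 * n - s := by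
  simp only [symmCuts, mem_union, mem_image]
  constructor
  · rintro (⟨s, hs, rfl⟩ | ⟨s, hs, rfl⟩)
    exacts [⟨s, hs, .inl rfl⟩, ⟨s, hs, .inr rfl⟩]
  · rintro ⟨s, hs, rfl | rfl⟩
    exacts [.inl ⟨s, hs, rfl⟩, .inr ⟨s, hs, rfl⟩]

lemma symmCuts_subset : symmCuts n S ⊆ Icc 1 (2 * n) := by
  intro c hc
  obtain ⟨s, -, hcs⟩ := mem_symmCuts.1 hc
  have := s.isLt
  rw [mem_Icc]
  omega

lemma sub_mem_symmCuts {c : ℕ} (hc : c ∈ symmCuts n S) : 2 * n + 1 - c ∈ symmCuts n S := by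
  obtain ⟨s, hs, hcs⟩ := mem_symmCuts.1 hc
  have := s.isLt
  exact mem_symmCuts.2 ⟨s, hs, by omega⟩

lemma succ_mem_symmCuts_iff (s : Fin n) : (s : ℕ) + 1 ∈ symmCuts n S ↔ s ∈ S := by
  refine ⟨fun h => ?_, fun h => mem_symmCuts.2 ⟨s, h, .inl rfl⟩⟩
  obtain ⟨t, ht, hst⟩ := mem_symmCuts.1 h
  have := s.isLt
  have := t.isLt
  rwa [Fin.ext (show (s : ℕ) = t by omega)]

lemma card_symmCuts : #(symmCuts n S) = 2 * #S := by
  have hdisj : Disjoint (S.image (fun s : Fin n => (s : ℕ) + 1))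
      (S.image (fun s : Fin n => 2 * n - s)) := by
    simp only [disjoint_left, mem_image]
    rintro _ ⟨s, -, rfl⟩ ⟨t, -, hts⟩
    have := s.isLt
    have := t.isLt
    omega
  rw [symmCuts, card_union_of_disjoint hdisj, card_image_of_injective, card_image_of_injective]
  · ring
  · intro s t h
    have := s.isLt
    have := t.isLt
    exact Fin.ext (by simp only at h; omega)
  · intro s t h
    exact Fin.ext (by simpa using h)

lemma symmCuts_injective : Function.Injective (symmCuts n) := by
  intro S T h
  ext s
  rw [← succ_mem_symmCuts_iff, h, succ_mem_symmCuts_iff]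

lemma exists_symmCuts_eq {D : Finset ℕ} (hD : D ⊆ Icc 1 (2 * n))
    (hsymm : ∀ c ∈ D, 2 * n + 1 - c ∈ D) : ∃ S, symmCuts n S = D := by
  refine ⟨({s : Fin n | (s : ℕ) + 1 ∈ D} : Finset (Fin n)), ?_⟩
  ext c
  rw [mem_symmCuts]
  constructor
  · rintro ⟨s, hs, rfl | rfl⟩
    · exact (mem_filter.1 hs).2
    · have := hsymm _ (mem_filter.1 hs).2
      rwa [show 2 * n + 1 - (s + 1) = 2 * n - s by omega] at this
  · intro hc
    have hc' := mem_Icc.1 (hD hc)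
    by_cases hcn : c ≤ n
    · exact ⟨⟨c - 1, by omega⟩, mem_filter.2 ⟨mem_univ _, by simpa [show c - 1 + 1 = c by omega]⟩,
        .inl (by simp only; omega)⟩
    · refine ⟨⟨2 * n - c, by omega⟩, mem_filter.2 ⟨mem_univ _, ?_⟩, .inr (by simp only; omega)⟩
      rw [show 2 * n - c + 1 = 2 * n + 1 - c by omega]
      exact hsymm c hc

end SymmetricCuts

section Bijection

variable {n : ℕ}

lemma descentSet_layeredPerm_symmCuts (S : Finset (Fin n)) :
    descentSet (2 * n + 1) (pval (layeredPerm (symmCuts n S) (2 * n + 1))) = symmCuts n S :=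
  descentSet_layeredPerm symmCuts_subset

lemma exists_layeredPerm_symmCuts_eq {σ : Equiv.Perm (Fin (2 * n + 1))} (hc : IsCentro σ)
    (h132 : Avoids132 σ) : ∃ S, layeredPerm (symmCuts n S) (2 * n + 1) = σ := by
  obtain ⟨S, hS⟩ := exists_symmCuts_eq (n := n) (D := descentSet (2 * n + 1) (pval σ))
    (filter_subset _ _) fun c hcD => sub_mem_descentSet hc hcD
  refine ⟨S, eq_of_orderedByCuts ?_ (orderedByCuts_descentSet h132 (avoids213_of_isCentro hc h132))⟩
  rw [← hS]
  exact orderedByCuts_layeredPerm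

variable (n) in
noncomputable def centroAvoidingEquiv :
    Finset (Fin n) ≃ {σ : Equiv.Perm (Fin (2 * n + 1)) // IsCentro σ ∧ Avoids132 σ} :=
  Equiv.ofBijective
    (fun S => ⟨layeredPerm (symmCuts n S) (2 * n + 1),
      isCentro_of_orderedByCuts _ orderedByCuts_layeredPerm fun _ => sub_mem_symmCuts,
      avoids132_of_orderedByCuts _ orderedByCuts_layeredPerm⟩)
    ⟨fun S T h => symmCuts_injective <| by
      rw [← descentSet_layeredPerm_symmCuts, ← descentSet_layeredPerm_symmCuts T]
      exact congrArg (fun σ => descentSet (2 * n + 1) (pval σ)) (congrArg Subtype.val h),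
    fun ⟨_, hc, h132⟩ =>
      (exists_layeredPerm_symmCuts_eq hc h132).imp fun _ hS => Subtype.ext hS⟩

lemma des_centroAvoidingEquiv (S : Finset (Fin n)) :
    des (centroAvoidingEquiv n S).1 = 2 * #S := by
  rw [des_eq_card_descentSet]
  exact (congrArg card (descentSet_layeredPerm_symmCuts S)).trans card_symmCuts

end Bijection

lemma card_finset_two_mul_card_eq (n k : ℕ) :
    Nat.card {S : Finset (Fin n) // 2 * #S = k} = if k % 2 = 0 then n.choose (k / 2) else 0 := by
  split_ifs with hk
  · rw [Nat.card_congr (Equiv.subtypeEquivRight fun S => show 2 * #S = k ↔ #S = k / 2 by omega),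
      Nat.card_eq_fintype_card, Fintype.card_finset_len, Fintype.card_fin]
  · have : IsEmpty {S : Finset (Fin n) // 2 * #S = k} := ⟨fun ⟨S, hS⟩ => hk (by omega)⟩
    exact Nat.card_of_isEmpty

end CentroAvoid

theorem stmt1_general (n k : ℕ) :
    Nat.card {σ : Equiv.Perm (Fin (2 * n + 1)) // IsCentro σ ∧ Avoids132 σ ∧ des σ = k}
      = if k % 2 = 0 then Nat.choose n (k / 2) else 0 := by
  rw [← CentroAvoid.card_finset_two_mul_card_eq]
  refine Nat.card_congr ((Equiv.subtypeEquiv (CentroAvoid.centroAvoidingEquiv n) fun S => ?_).trans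
    ((Equiv.subtypeSubtypeEquivSubtypeInter _ (fun σ => des σ = k)).trans
      (Equiv.subtypeEquivRight fun _ => and_assoc))).symm
  rw [CentroAvoid.des_centroAvoidingEquiv]

/-- For every `n ≥ 1` and `k ≥ 0`, the number of centrosymmetric
132-avoiding permutations of `{1,…,2n+1}` with exactly `k` descents is
`C(n, k/2)` if `k` is even and `0` if `k` is odd. -/
theorem stmt1 (n k : ℕ) (hn : 1 ≤ n) :
    Nat.card {σ : Equiv.Perm (Fin (2 * n + 1)) // IsCentro σ ∧ Avoids132 σ ∧ des σ = k}
      = if k % 2 = 0 then Nat.choose n (k / 2) else 0 :=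
  stmt1_general n k
end

section
/- Let n ≥ 1 and let σ ∈ C_{2n}. Let l ≥ 0 be the largest integer with l+1 ≤ n such that σ(j) > σ(1) for all 2 ≤ j ≤ l+1. Then σ avoids 123 if and only if all of the following hold: (i) σ(1) ≥ n; (ii) σ(1+j) = 2n+1−j for every 1 ≤ j ≤ l, and 2n−l+1 > σ(1); (iii) if l+2 ≤ n then σ(l+2) < σ(1); (iv) the permutation of S_{2n−2l−2} that is order-isomorphic to the subsequence σ(l+2), σ(l+3), …, σ(2n−l−1) (i.e., σ with the first l+1 and the last l+1 entries deleted) is centrosymmetric and avoids 123. -/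
/-!
If `σ` avoids 123, no value above `σ 1` may follow a smaller one above `σ 1`; this forces the
run `σ 2, …, σ (l + 1)` to be `2n, 2n - 1, …, 2n - l + 1`, and `σ 1 ≥ n` since otherwise the
value `σ 1 + 1` would sit between `σ 1` and `σ (2n) = 2n + 1 - σ 1`. Conversely, centrosymmetry
makes the last `l` entries mirror the head run, and reflecting occurrences
`(i, j, k) ↦ (2n + 1 - k, 2n + 1 - j, 2n + 1 - i)` shows that neither run takes part in a 123.
What remains is `σ 1`, the middle block and `σ (2n)`: an occurrence through `σ 1` and the middle
block moves to one starting at `σ (l + 2) < σ 1`, and `σ 1 ≥ n` rules out one through both ends.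
The pattern of the middle block is centrosymmetric because a permutation of `Fin M` is
determined by its relative order, and the reversed complement has the same relative order.
-/
open Equiv

lemma pval_add_one {N : ℕ} (σ : Perm (Fin N)) {a : ℕ} (ha : a < N) :
    pval σ (a + 1) = σ ⟨a, ha⟩ + 1 := by
  simp [pval, ha]

lemma pval_le {N : ℕ} (σ : Perm (Fin N)) (i : ℕ) : pval σ i ≤ N := by
  unfold pval
  split_ifs
  · exact Fin.is_lt _
  · exact Nat.zero_le N

lemma pval_inj {N : ℕ} (σ : Perm (Fin N)) {i j : ℕ} (hi : 1 ≤ i) (hiN : i ≤ N)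
    (hj : 1 ≤ j) (hjN : j ≤ N) : pval σ i = pval σ j ↔ i = j := by
  refine ⟨fun h => ?_, congrArg _⟩
  obtain ⟨a, rfl⟩ := Nat.exists_eq_add_of_le' hi
  obtain ⟨b, rfl⟩ := Nat.exists_eq_add_of_le' hj
  rw [pval_add_one σ (by omega), pval_add_one σ (by omega)] at h
  have := Fin.mk.inj_iff.mp (σ.injective (a₁ := ⟨a, _⟩) (a₂ := ⟨b, _⟩) (Fin.ext (by omega)))
  omega

lemma exists_pval_eq {N : ℕ} (σ : Perm (Fin N)) {v : ℕ} (hv : 1 ≤ v) (hvN : v ≤ N) :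
    ∃ p, 1 ≤ p ∧ p ≤ N ∧ pval σ p = v := by
  obtain ⟨w, rfl⟩ := Nat.exists_eq_add_of_le' hv
  refine ⟨σ.symm ⟨w, by omega⟩ + 1, by omega, (σ.symm _).is_lt, ?_⟩
  simp [pval_add_one σ (σ.symm _).is_lt]

lemma exists_perm_lt_iff_lt {α : Type*} [LinearOrder α] {M : ℕ} {g : Fin M → α}
    (hg : Function.Injective g) : ∃ τ : Perm (Fin M), ∀ a b, τ a < τ b ↔ g a < g b := by
  have hmono : StrictMono (g ∘ Tuple.sort g) :=
    (Tuple.monotone_sort g).strictMono_of_injective (hg.comp (Tuple.sort g).injective)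
  refine ⟨(Tuple.sort g)⁻¹, fun a b => ?_⟩
  simpa using (hmono.lt_iff_lt (a := (Tuple.sort g)⁻¹ a) (b := (Tuple.sort g)⁻¹ b)).symm

lemma Equiv.Perm.eq_of_lt_iff_lt_s3 {M : ℕ} {τ τ' : Perm (Fin M)}
    (h : ∀ a b, τ a < τ b ↔ τ' a < τ' b) : τ = τ' := by
  have hmono : StrictMono (τ' ∘ τ.symm) := fun x y hxy => by
    simpa using (h (τ.symm x) (τ.symm y)).1 (by simpa using hxy)
  ext a
  simpa using (Fin.coe_orderIso_apply
    (hmono.orderIsoOfSurjective _ (τ'.surjective.comp τ.symm.surjective)) (τ a)).symm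

lemma isCentro_of_apply_rev {M : ℕ} {τ : Perm (Fin M)} (h : ∀ a, τ a.rev = (τ a).rev) :
    IsCentro τ := by
  intro i hi hiM
  obtain ⟨a, rfl⟩ := Nat.exists_eq_add_of_le' hi
  have ha : a < M := by omega
  have hrev : pval τ (M + 1 - (a + 1)) = τ (Fin.rev ⟨a, ha⟩) + 1 := by
    rw [show M + 1 - (a + 1) = M - (a + 1) + 1 by omega, pval_add_one τ (by omega)]
    rfl
  rw [hrev, pval_add_one τ ha, h, Fin.val_rev]
  have := (τ ⟨a, ha⟩).is_lt
  omega

lemma isCentro_of_lt_iff_lt {M T : ℕ} {τ : Perm (Fin M)} {g : Fin M → ℕ}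
    (hτ : ∀ a b, τ a < τ b ↔ g a < g b) (hg : ∀ a, g a.rev + g a = T) : IsCentro τ := by
  have h : τ = Fin.revPerm.trans (τ.trans Fin.revPerm) := Perm.eq_of_lt_iff_lt_s3 fun a b => by
    have := hg a
    have := hg b
    simp only [Equiv.trans_apply, Fin.revPerm_apply, Fin.rev_lt_rev, hτ]
    omega
  refine isCentro_of_apply_rev fun a => ?_
  conv_lhs => rw [h]
  simp

lemma IsCentro.exists_isCentro_middle {N s M : ℕ} {σ : Perm (Fin N)} (hσ : IsCentro σ)
    (hs : 1 ≤ s) (hsM : 2 * s + M = N + 2) :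
    ∃ τ : Perm (Fin M),
      (∀ a b : Fin M, τ a < τ b ↔ pval σ (s + a) < pval σ (s + b)) ∧ IsCentro τ := by
  have hg : Function.Injective fun a : Fin M => pval σ (s + a) := fun a b h =>
    Fin.ext (by have := (pval_inj σ (by omega) (by omega) (by omega) (by omega)).1 h; omega)
  obtain ⟨τ, hτ⟩ := exists_perm_lt_iff_lt hg
  refine ⟨τ, hτ, isCentro_of_lt_iff_lt hτ (T := N + 1) fun a => ?_⟩
  have := hσ (s + a) (by omega) (by omega)
  rw [show N + 1 - (s + a) = s + a.rev by rw [Fin.val_rev]; omega] at this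
  omega

/-- `Avoids123 σ` unfolds to `¬ ∃ i j k, IsOcc123 σ i j k`. -/
def IsOcc123 {N : ℕ} (σ : Perm (Fin N)) (i j k : ℕ) : Prop :=
  1 ≤ i ∧ i < j ∧ j < k ∧ k ≤ N ∧ pval σ i < pval σ j ∧ pval σ j < pval σ k

lemma avoids123_iff_of_lt_iff_lt {M N s : ℕ} {τ : Perm (Fin M)} {σ : Perm (Fin N)}
    (hs : 1 ≤ s) (hsM : s + M ≤ N + 1)
    (hτ : ∀ a b : Fin M, τ a < τ b ↔ pval σ (s + a) < pval σ (s + b)) :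
    Avoids123 τ ↔ ∀ i j k, IsOcc123 σ i j k → s ≤ i → k < s + M → False := by
  constructor
  · rintro hτa i j k ⟨-, hij, hjk, -, hvij, hvjk⟩ hi hk
    obtain ⟨a, rfl⟩ := Nat.exists_eq_add_of_le hi
    obtain ⟨b, rfl⟩ := Nat.exists_eq_add_of_le (hi.trans hij.le)
    obtain ⟨c, rfl⟩ := Nat.exists_eq_add_of_le (hi.trans (hij.trans hjk).le)
    refine hτa ⟨a + 1, b + 1, c + 1, by omega, by omega, by omega, by omega, ?_, ?_⟩
    · rw [pval_add_one τ (by omega), pval_add_one τ (by omega)]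
      exact Nat.succ_lt_succ ((hτ ⟨a, _⟩ ⟨b, _⟩).2 hvij)
    · rw [pval_add_one τ (by omega), pval_add_one τ (by omega)]
      exact Nat.succ_lt_succ ((hτ ⟨b, _⟩ ⟨c, _⟩).2 hvjk)
  · rintro hσa ⟨i, j, k, hi, hij, hjk, hk, hvij, hvjk⟩
    obtain ⟨a, rfl⟩ := Nat.exists_eq_add_of_le' hi
    obtain ⟨b, rfl⟩ := Nat.exists_eq_add_of_le' (hi.trans hij.le)
    obtain ⟨c, rfl⟩ := Nat.exists_eq_add_of_le' (hi.trans (hij.trans hjk).le)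
    rw [pval_add_one τ (by omega), pval_add_one τ (by omega)] at hvij hvjk
    refine hσa (s + a) (s + b) (s + c) ⟨by omega, by omega, by omega, by omega, ?_, ?_⟩
      le_self_add (by omega)
    · exact (hτ ⟨a, _⟩ ⟨b, _⟩).1 (Nat.succ_lt_succ_iff.1 hvij)
    · exact (hτ ⟨b, _⟩ ⟨c, _⟩).1 (Nat.succ_lt_succ_iff.1 hvjk)

lemma IsOcc123.reflect {N i j k : ℕ} {σ : Perm (Fin N)} (hσ : IsCentro σ)
    (h : IsOcc123 σ i j k) : IsOcc123 σ (N + 1 - k) (N + 1 - j) (N + 1 - i) := by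
  obtain ⟨hi, hij, hjk, hk, hvij, hvjk⟩ := h
  have := hσ i hi (by omega)
  have := hσ j (by omega) (by omega)
  have := hσ k (by omega) hk
  exact ⟨by omega, by omega, by omega, by omega, by omega, by omega⟩

section Forward

variable {N : ℕ} {σ : Perm (Fin N)}

lemma Avoids123.le_two_mul_pval_one (hσ : IsCentro σ) (hA : Avoids123 σ) :
    N ≤ 2 * pval σ 1 := by
  by_contra! hlt
  have hlast := hσ 1 le_rfl (by omega)
  rw [Nat.add_sub_cancel] at hlast
  obtain ⟨p, hp, hpN, hpv⟩ := exists_pval_eq σ (v := pval σ 1 + 1) (by omega) (by omega)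
  have hp1 : p ≠ 1 := by rintro rfl; omega
  have hpN' : p ≠ N := by rintro rfl; omega
  exact hA ⟨1, p, N, le_rfl, by omega, by omega, le_rfl, by omega, by omega⟩

lemma Avoids123.pval_lt_of_pval_one_lt (hA : Avoids123 σ) {q p : ℕ} (hq : 1 < q) (hqp : q < p)
    (hp : p ≤ N) (h1 : pval σ 1 < pval σ q) : pval σ p < pval σ q := by
  have hne : pval σ p ≠ pval σ q := fun h => by
    have := (pval_inj σ (by omega) hp (by omega) (by omega)).1 h
    omega
  by_contra! h
  exact hA ⟨1, q, p, le_rfl, hq, hqp, hp, h1, by omega⟩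

lemma Avoids123.pval_one_add (hA : Avoids123 σ) {l : ℕ} (hlN : l + 1 ≤ N)
    (hl : ∀ j, 2 ≤ j → j ≤ l + 1 → pval σ 1 < pval σ j) :
    ∀ j, 1 ≤ j → j ≤ l → pval σ (1 + j) = N + 1 - j := by
  intro j
  induction j using Nat.strong_induction_on with
  | _ j ih =>
  intro hj hjl
  have hv1 := hl (1 + j) (by omega) (by omega)
  have hle : pval σ (1 + j) ≤ N + 1 - j := by
    by_contra! hgt
    have := pval_le σ (1 + j)
    set j' := N + 1 - pval σ (1 + j)
    have hvj' : pval σ (1 + j') = pval σ (1 + j) := by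
      rw [ih j' (by omega) (by omega) (by omega)]
      omega
    have := (pval_inj σ (by omega) (by omega) (by omega) (by omega)).1 hvj'
    omega
  obtain ⟨p, hp, hpN, hpv⟩ := exists_pval_eq σ (v := N + 1 - j) (by omega) (by omega)
  rcases lt_trichotomy p (1 + j) with hlt | rfl | hgt
  · rcases hp.eq_or_lt with rfl | hp
    · omega
    · have := ih (p - 1) (by omega) (by omega) (by omega)
      rw [show 1 + (p - 1) = p by omega] at this
      omega
  · exact hpv
  · have := hA.pval_lt_of_pval_one_lt (by omega) hgt hpN hv1
    omega

end Forward

lemma pval_lt_pval_one_of_not_forall {N l : ℕ} {σ : Perm (Fin N)} (hlN : l + 2 ≤ N)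
    (hl : ∀ j, 2 ≤ j → j ≤ l + 1 → pval σ 1 < pval σ j)
    (hmax : ¬ ∀ j, 2 ≤ j → j ≤ l + 2 → pval σ 1 < pval σ j) : pval σ (l + 2) < pval σ 1 := by
  have hne : pval σ 1 ≠ pval σ (l + 2) := fun h => by
    have := (pval_inj σ le_rfl (by omega) (by omega) hlN).1 h
    omega
  by_contra! h
  refine hmax fun j hj hjl => ?_
  rcases Nat.lt_or_ge j (l + 2) with hjl' | hjl'
  · exact hl j hj (by omega)
  · obtain rfl : j = l + 2 := by omega
    omega

section Backward

variable {N l : ℕ} {σ : Perm (Fin N)}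

lemma pval_lt_of_mem_head (hhead : ∀ j, 1 ≤ j → j ≤ l → pval σ (1 + j) = N + 1 - j)
    {p q : ℕ} (hp : 2 ≤ p) (hpl : p ≤ l + 1) (hpq : p < q) (hq : q ≤ N) :
    pval σ q < pval σ p := by
  have hvp := hhead (p - 1) (by omega) (by omega)
  rw [show 1 + (p - 1) = p by omega] at hvp
  by_contra! h
  have := pval_le σ q
  set j := N + 1 - pval σ q
  have hvj : pval σ (1 + j) = pval σ q := by
    rw [hhead j (by omega) (by omega)]
    omega
  have := (pval_inj σ (by omega) (by omega) (by omega) hq).1 hvj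
  omega

lemma IsOcc123.head (hhead : ∀ j, 1 ≤ j → j ≤ l → pval σ (1 + j) = N + 1 - j) {i j k : ℕ}
    (h : IsOcc123 σ i j k) : (i = 1 ∨ l + 2 ≤ i) ∧ l + 2 ≤ j := by
  obtain ⟨hi, hij, hjk, hk, hvij, hvjk⟩ := h
  constructor
  · by_contra! hi'
    have := pval_lt_of_mem_head hhead (p := i) (q := j) (by omega) (by omega) hij (by omega)
    omega
  · by_contra! hj'
    have := pval_lt_of_mem_head hhead (p := j) (q := k) (by omega) (by omega) hjk hk
    omega

end Backward

lemma avoids123_of_middle {n l : ℕ} {σ : Perm (Fin (2 * n))} (hσ : IsCentro σ) (hl : l + 1 ≤ n)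
    (h1 : n ≤ pval σ 1) (hhead : ∀ j, 1 ≤ j → j ≤ l → pval σ (1 + j) = 2 * n + 1 - j)
    (h3 : l + 2 ≤ n → pval σ (l + 2) < pval σ 1)
    (hmid : ∀ i j k, IsOcc123 σ i j k → l + 2 ≤ i → k < l + 2 + (2 * n - 2 * l - 2) → False) :
    Avoids123 σ := by
  have hshape : ∀ {i j k}, IsOcc123 σ i j k → (i = 1 ∨ l + 2 ≤ i) ∧ j ≤ 2 * n - l - 1 ∧
      (k = 2 * n ∨ k ≤ 2 * n - l - 1) := by
    intro i j k h
    obtain ⟨hi, -⟩ := h.head hhead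
    obtain ⟨hk, hj⟩ := (h.reflect hσ).head hhead
    obtain ⟨-, -, -, hkN, -⟩ := h
    omega
  have hfirst : ∀ {j k}, IsOcc123 σ 1 j k → k ≤ 2 * n - l - 1 → False := by
    intro j k h hk
    have hj := (h.head hhead).2
    obtain ⟨-, -, hjk, hkN, hv1j, hvjk⟩ := h
    have := h3 (by omega)
    rcases hj.eq_or_lt with rfl | hj
    · omega
    · exact hmid (l + 2) j k ⟨by omega, hj, hjk, hkN, by omega, hvjk⟩ le_rfl (by omega)
  rintro ⟨i, j, k, h⟩
  obtain ⟨hi, -, hk⟩ := hshape h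
  rcases hi with rfl | hi <;> rcases hk with rfl | hk
  · have := hσ 1 le_rfl (by omega)
    rw [Nat.add_sub_cancel] at this
    obtain ⟨-, -, -, -, hv1j, hvjk⟩ := h
    omega
  · exact hfirst h hk
  · have h' := IsOcc123.reflect hσ h
    rw [show 2 * n + 1 - 2 * n = 1 by omega] at h'
    exact hfirst h' (by omega)
  · exact hmid i j k h hi (by omega)

theorem stmt3_general (n l : ℕ) (σ : Equiv.Perm (Fin (2 * n)))
    (hσ : IsCentro σ)
    (hl1 : l + 1 ≤ n)
    (hl2 : ∀ j, 2 ≤ j → j ≤ l + 1 → pval σ 1 < pval σ j)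
    (hl3 : ∀ l', l' + 1 ≤ n → (∀ j, 2 ≤ j → j ≤ l' + 1 → pval σ 1 < pval σ j) → l' ≤ l) :
    Avoids123 σ ↔
      (n ≤ pval σ 1) ∧
      ((∀ j, 1 ≤ j → j ≤ l → pval σ (1 + j) = 2 * n + 1 - j) ∧ pval σ 1 < 2 * n - l + 1) ∧
      (l + 2 ≤ n → pval σ (l + 2) < pval σ 1) ∧
      (∃ τ : Equiv.Perm (Fin (2 * n - 2 * l - 2)),
        (∀ a b : Fin (2 * n - 2 * l - 2),
          τ a < τ b ↔ pval σ (l + 2 + (a : ℕ)) < pval σ (l + 2 + (b : ℕ))) ∧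
        IsCentro τ ∧ Avoids123 τ) := by
  have h3 : l + 2 ≤ n → pval σ (l + 2) < pval σ 1 := fun hln =>
    pval_lt_pval_one_of_not_forall (by omega) hl2 fun h => by
      have := hl3 (l + 1) hln h
      omega
  constructor
  · intro hA
    have hhead := hA.pval_one_add (by omega) hl2
    have h2 : pval σ 1 < 2 * n - l + 1 := by
      rcases Nat.eq_zero_or_pos l with rfl | hl
      · have := pval_le σ 1
        omega
      · have := hhead l hl le_rfl
        have := hl2 (1 + l) (by omega) (by omega)
        omega
    obtain ⟨τ, hτ, hτc⟩ := hσ.exists_isCentro_middle (s := l + 2) (M := 2 * n - 2 * l - 2)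
      (by omega) (by omega)
    refine ⟨by have := hA.le_two_mul_pval_one hσ; omega, ⟨hhead, h2⟩, h3, τ, hτ, hτc, ?_⟩
    exact (avoids123_iff_of_lt_iff_lt (by omega) (by omega) hτ).2 fun i j k h _ _ => hA ⟨i, j, k, h⟩
  · rintro ⟨h1, ⟨hhead, -⟩, -, τ, hτ, -, hτa⟩
    exact avoids123_of_middle hσ hl1 h1 hhead h3
      ((avoids123_iff_of_lt_iff_lt (by omega) (by omega) hτ).1 hτa)

/-- characterization of centrosymmetric 123-avoiding permutations of
`{1,…,2n}` in terms of the initial left-to-right minimum `σ(1)` and the maximal run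
`σ(2),…,σ(l+1)` of values above `σ(1)`. -/
theorem stmt3 (n l : ℕ) (hn : 1 ≤ n) (σ : Equiv.Perm (Fin (2 * n)))
    (hσ : IsCentro σ)
    (hl1 : l + 1 ≤ n)
    (hl2 : ∀ j, 2 ≤ j → j ≤ l + 1 → pval σ 1 < pval σ j)
    (hl3 : ∀ l', l' + 1 ≤ n → (∀ j, 2 ≤ j → j ≤ l' + 1 → pval σ 1 < pval σ j) → l' ≤ l) :
    Avoids123 σ ↔
      (n ≤ pval σ 1) ∧
      ((∀ j, 1 ≤ j → j ≤ l → pval σ (1 + j) = 2 * n + 1 - j) ∧ pval σ 1 < 2 * n - l + 1) ∧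
      (l + 2 ≤ n → pval σ (l + 2) < pval σ 1) ∧
      (∃ τ : Equiv.Perm (Fin (2 * n - 2 * l - 2)),
        (∀ a b : Fin (2 * n - 2 * l - 2),
          τ a < τ b ↔ pval σ (l + 2 + (a : ℕ)) < pval σ (l + 2 + (b : ℕ))) ∧
        IsCentro τ ∧ Avoids123 τ) :=
  stmt3_general n l σ hσ hl1 hl2 hl3
end

section
/- For n ≥ 1, define a map from C_{2n}(132) to S_{2n+1} by sending σ to α, where: α(n+1) = n+1; for 1 ≤ i ≤ n, α(i) = σ(i) if σ(i) ≤ n and α(i) = σ(i)+1 if σ(i) > n; and for n+2 ≤ i ≤ 2n+1, α(i) = σ(i−1) if σ(i−1) ≤ n and α(i) = σ(i−1)+1 if σ(i−1) > n. Then this map is a bijection from C_{2n}(132) onto C_{2n+1}(132), and moreover des(α) = des(σ) if des(σ) is even, while des(α) = des(σ)+1 if des(σ) is odd. -/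
/-- `α ∈ S_{2n+1}` is the image of `σ ∈ S_{2n}` under the insertion map:
`α(n+1) = n+1`, `α(i)` is `σ(i)` bumped by one if `σ(i) > n` for `i ≤ n`, and
`α(i)` is `σ(i−1)` bumped by one if `σ(i−1) > n` for `i ≥ n+2`. -/
def BijRel (n : ℕ) (σ : Equiv.Perm (Fin (2 * n))) (α : Equiv.Perm (Fin (2 * n + 1))) : Prop :=
  pval α (n + 1) = n + 1 ∧
  (∀ i, 1 ≤ i → i ≤ n →
    pval α i = if pval σ i ≤ n then pval σ i else pval σ i + 1) ∧
  (∀ i, n + 2 ≤ i → i ≤ 2 * n + 1 →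
    pval α i = if pval σ (i - 1) ≤ n then pval σ (i - 1) else pval σ (i - 1) + 1)

/-!
Away from its fixed middle entry, `α` is `σ` with positions and values relabelled by the
increasing map `bump n : ℕ → ℕ` that skips `n + 1` (on `Fin`, this is `Fin.succAbove` at the
center). Hence `α` and `σ` determine each other, and centrosymmetry and the 132-patterns avoiding
the middle entry correspond. A 132-pattern of `α` through its middle entry is reflected, using
centrosymmetry of `σ`, into a 132-pattern of `σ`.

Away from positions `n` and `n + 1`, the descents of `α` are those of `σ` away from `n`, and `α`
descends at both `n` and `n + 1` exactly when `σ` descends at `n`. Centrosymmetry pairs the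
descents of `σ` at `i` and `2n - i`, so this middle descent occurs exactly when `des σ` is odd.
-/

section Pval

variable {K : ℕ} (σ : Equiv.Perm (Fin K))

lemma pval_add_one_s17 (j : Fin K) : pval σ (j + 1) = σ j + 1 := by
  simp [pval]

lemma exists_fin_eq_add_one {i : ℕ} (h1 : 1 ≤ i) (h2 : i ≤ K) : ∃ j : Fin K, i = j + 1 :=
  ⟨⟨i - 1, by omega⟩, by simp only; omega⟩

lemma pval_injOn {i j : ℕ} (hi1 : 1 ≤ i) (hi2 : i ≤ K) (hj1 : 1 ≤ j) (hj2 : j ≤ K)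
    (h : pval σ i = pval σ j) : i = j := by
  obtain ⟨i, rfl⟩ := exists_fin_eq_add_one hi1 hi2
  obtain ⟨j, rfl⟩ := exists_fin_eq_add_one hj1 hj2
  simp only [pval_add_one_s17, add_left_inj, Fin.val_inj, σ.apply_eq_iff_eq] at h
  rw [h]

variable {σ} in
lemma Equiv.Perm.ext_pval {τ : Equiv.Perm (Fin K)}
    (h : ∀ i, 1 ≤ i → i ≤ K → pval σ i = pval τ i) : σ = τ := by
  ext j
  simpa [pval_add_one_s17] using h (j + 1) (by omega) (by omega)

end Pval

def bump (n v : ℕ) : ℕ := if v ≤ n then v else v + 1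

section Bump

variable {n a b : ℕ}

lemma bump_strictMono : StrictMono (bump n) := by
  intro a b h; unfold bump; split_ifs <;> omega

lemma bump_of_le (h : a ≤ n) : bump n a = a := if_pos h

lemma bump_of_lt (h : n < a) : bump n a = a + 1 := if_neg (by omega)

lemma le_bump : a ≤ bump n a := by
  unfold bump; split_ifs <;> omega

lemma bump_le_add_one : bump n a ≤ a + 1 := by
  unfold bump; split_ifs <;> omega

lemma bump_lt_succ_iff : bump n a < n + 1 ↔ a ≤ n := by
  unfold bump; split_ifs <;> omega

lemma lt_bump_iff : n + 1 < bump n a ↔ n < a := by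
  unfold bump; split_ifs <;> omega

lemma bump_add_one (h : a ≠ n) : bump n (a + 1) = bump n a + 1 := by
  unfold bump; split_ifs <;> omega

lemma bump_add_bump_eq_iff : bump n a + bump n b = 2 * n + 2 ↔ a + b = 2 * n + 1 := by
  unfold bump; split_ifs <;> omega

lemma bump_two_mul_add_one_sub (h : a ≤ 2 * n + 1) :
    bump n (2 * n + 1 - a) = 2 * n + 1 + 1 - bump n a := by
  unfold bump; split_ifs <;> omega

lemma exists_bump_eq (h1 : 1 ≤ a) (h2 : a ≤ 2 * n + 1) (h : a ≠ n + 1) :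
    ∃ p, 1 ≤ p ∧ p ≤ 2 * n ∧ bump n p = a := by
  by_cases ha : a ≤ n
  · exact ⟨a, h1, by omega, bump_of_le ha⟩
  · exact ⟨a - 1, by omega, by omega, by rw [bump_of_lt (by omega)]; omega⟩

end Bump

def center (n : ℕ) : Fin (2 * n + 1) := ⟨n, by omega⟩

lemma pval_center {n : ℕ} (α : Equiv.Perm (Fin (2 * n + 1))) :
    pval α (n + 1) = α (center n) + 1 :=
  pval_add_one_s17 α (center n)

lemma bump_add_one_eq_succAbove {n : ℕ} (j : Fin (2 * n)) :
    bump n (j + 1) = (center n).succAbove j + 1 := by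
  by_cases hj : (j : ℕ) < n
  · rw [bump_of_le hj, Fin.succAbove_of_castSucc_lt _ _ hj, Fin.val_castSucc]
  · rw [bump_of_lt (by omega), Fin.succAbove_of_le_castSucc _ _ (by exact not_lt.1 hj),
      Fin.val_succ]

namespace BijRel

variable {n : ℕ} {σ σ' : Equiv.Perm (Fin (2 * n))} {α α' : Equiv.Perm (Fin (2 * n + 1))}

lemma pval_bump (h : BijRel n σ α) {p : ℕ} (hp1 : 1 ≤ p) (hp2 : p ≤ 2 * n) :
    pval α (bump n p) = bump n (pval σ p) := by
  by_cases hp : p ≤ n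
  · rw [bump_of_le hp]; exact h.2.1 p hp1 hp
  · rw [bump_of_lt (by omega)]; simpa [bump] using h.2.2 (p + 1) (by omega) (by omega)

lemma of_pval_bump (h₀ : pval α (n + 1) = n + 1)
    (h : ∀ p, 1 ≤ p → p ≤ 2 * n → pval α (bump n p) = bump n (pval σ p)) :
    BijRel n σ α := by
  refine ⟨h₀, fun i hi1 hin => ?_, fun i hi1 hi2 => ?_⟩
  · simpa [bump, hin] using h i hi1 (by omega)
  · have := h (i - 1) (by omega) (by omega)
    rwa [bump_of_lt (by omega), Nat.sub_add_cancel (by omega)] at this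

lemma of_succAbove (h₀ : α (center n) = center n)
    (h : ∀ j, α ((center n).succAbove j) = (center n).succAbove (σ j)) : BijRel n σ α := by
  refine of_pval_bump ?_ fun p hp1 hp2 => ?_
  · rw [pval_center, h₀]; rfl
  · obtain ⟨j, rfl⟩ := exists_fin_eq_add_one hp1 hp2
    rw [pval_add_one_s17, bump_add_one_eq_succAbove, bump_add_one_eq_succAbove, pval_add_one_s17, h]

lemma exists_pval_eq_bump (h : BijRel n σ α) {x : ℕ} (hx1 : 1 ≤ x) (hx2 : x ≤ 2 * n + 1)
    (hx : x ≠ n + 1) :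
    ∃ p, 1 ≤ p ∧ p ≤ 2 * n ∧ bump n p = x ∧ pval α x = bump n (pval σ p) := by
  obtain ⟨p, hp1, hp2, rfl⟩ := exists_bump_eq hx1 hx2 hx
  exact ⟨p, hp1, hp2, rfl, h.pval_bump hp1 hp2⟩

lemma right_unique (h : BijRel n σ α) (h' : BijRel n σ α') : α = α' := by
  refine Equiv.Perm.ext_pval fun i hi1 hi2 => ?_
  by_cases hi : i = n + 1
  · rw [hi, h.1, h'.1]
  · obtain ⟨p, hp1, hp2, rfl⟩ := exists_bump_eq hi1 hi2 hi
    rw [h.pval_bump hp1 hp2, h'.pval_bump hp1 hp2]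

lemma left_unique (h : BijRel n σ α) (h' : BijRel n σ' α) : σ = σ' :=
  Equiv.Perm.ext_pval fun _ hp1 hp2 =>
    bump_strictMono.injective ((h.pval_bump hp1 hp2).symm.trans (h'.pval_bump hp1 hp2))

lemma isCentro_iff (h : BijRel n σ α) : IsCentro α ↔ IsCentro σ := by
  have key : ∀ p, 1 ≤ p → p ≤ 2 * n →
      (pval α (bump n p) + pval α (2 * n + 1 + 1 - bump n p) = 2 * n + 1 + 1 ↔
        pval σ p + pval σ (2 * n + 1 - p) = 2 * n + 1) := fun p hp1 hp2 => by
    rw [← bump_two_mul_add_one_sub (by omega), h.pval_bump hp1 hp2,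
      h.pval_bump (by omega) (by omega), ← bump_add_bump_eq_iff]
  constructor
  · intro hα p hp1 hp2
    exact (key p hp1 hp2).1 (hα _ (hp1.trans le_bump) (bump_le_add_one.trans (by omega)))
  · intro hσ i hi1 hi2
    by_cases hi : i = n + 1
    · rw [hi, show 2 * n + 1 + 1 - (n + 1) = n + 1 by omega, h.1]; ring
    · obtain ⟨p, hp1, hp2, rfl⟩ := exists_bump_eq hi1 hi2 hi
      exact (key p hp1 hp2).2 (hσ p hp1 hp2)

end BijRel

lemma exists_bijRel {n : ℕ} (σ : Equiv.Perm (Fin (2 * n))) :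
    ∃ α, BijRel n σ α := by
  let e := finSuccAboveEquiv (center n)
  refine ⟨σ.extendDomain e, .of_succAbove ?_ fun j => ?_⟩
  · exact Equiv.Perm.extendDomain_apply_not_subtype _ _ (not_not.2 rfl)
  · exact Equiv.Perm.extendDomain_apply_image σ e j

lemma exists_bijRel_of_pval_center {n : ℕ} {α : Equiv.Perm (Fin (2 * n + 1))}
    (h : pval α (n + 1) = n + 1) : ∃ σ, BijRel n σ α := by
  have h₀ : α (center n) = center n := by
    refine Fin.ext (show (α (center n) : ℕ) = n from ?_)
    have := pval_center α
    omega
  let e := (finSuccAboveEquiv (center n)).symm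
  refine ⟨e.permCongr (α.subtypePerm fun x => α.injective.ne_iff' h₀),
    .of_succAbove h₀ fun j => ?_⟩
  simp only [e, Equiv.permCongr_apply, Equiv.symm_symm, Equiv.Perm.subtypePerm_apply]
  generalize_proofs hx
  exact (congrArg Subtype.val ((finSuccAboveEquiv (center n)).apply_symm_apply ⟨_, hx⟩)).symm

-- The three ways a 132-pattern of `α` can use its middle entry: as the `2`, the `3`, the `1`.
namespace Avoids132

variable {n i j k : ℕ} {σ : Equiv.Perm (Fin (2 * n))}

lemma pval_le_of_left_pval_le (hσ : Avoids132 σ) (hc : IsCentro σ) (hi : 1 ≤ i) (hij : i < j)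
    (hjn : j ≤ n) (hσi : pval σ i ≤ n) : pval σ j ≤ n := by
  by_contra! hσj
  have ci := hc i hi (by omega)
  have cj := hc j (by omega) (by omega)
  have hne : pval σ i ≠ pval σ (2 * n + 1 - j) := fun heq => by
    have := pval_injOn σ hi (by omega) (by omega) (by omega) heq
    omega
  rcases lt_or_gt_of_ne hne with hlt | hgt
  · exact hσ ⟨i, j, 2 * n + 1 - j, hi, hij, by omega, by omega, hlt, by omega⟩
  · exact hσ ⟨i, j, 2 * n + 1 - i, hi, hij, by omega, by omega, by omega, by omega⟩

lemma half_lt_pval_of_left_lt (hσ : Avoids132 σ) (hc : IsCentro σ) (hi : 1 ≤ i) (hin : i ≤ n)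
    (hnk : n < k) (hk : k ≤ 2 * n) (hik : pval σ i < pval σ k) : n < pval σ k := by
  by_contra! hσk
  have ci := hc i hi (by omega)
  have ck := hc k (by omega) hk
  rcases lt_trichotomy i (2 * n + 1 - k) with hlt | heq | hgt
  · exact hσ ⟨i, 2 * n + 1 - k, k, hi, hlt, by omega, hk, hik, by omega⟩
  · subst heq; omega
  · exact hσ ⟨i, 2 * n + 1 - i, k, hi, by omega, by omega, hk, hik, by omega⟩

lemma pval_le_of_right_half_lt (hσ : Avoids132 σ) (hc : IsCentro σ) (hnj : n < j) (hjk : j < k)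
    (hk : k ≤ 2 * n) (hσk : n < pval σ k) : pval σ j ≤ pval σ k := by
  by_contra! hkj
  have cj := hc j (by omega) (by omega)
  exact hσ ⟨2 * n + 1 - j, j, k, by omega, by omega, hjk, hk, by omega, hkj⟩

end Avoids132

def descentIndicator {N : ℕ} (σ : Equiv.Perm (Fin N)) (i : ℕ) : ℕ :=
  if pval σ (i + 1) < pval σ i then 1 else 0

lemma descentIndicator_le_one {N : ℕ} (σ : Equiv.Perm (Fin N)) (i : ℕ) :
    descentIndicator σ i ≤ 1 := by
  unfold descentIndicator; split_ifs <;> omega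

lemma des_eq_sum_descentIndicator {N : ℕ} (σ : Equiv.Perm (Fin N)) :
    des σ = ∑ i ∈ Finset.Ico 1 N, descentIndicator σ i := by
  rw [des, Nat.card_congr (Equiv.subtypeEquivRight (q := (· ∈ (Finset.Ico 1 N).filter
      fun i => pval σ (i + 1) < pval σ i)) fun i => by
        simp only [Finset.mem_filter, Finset.mem_Ico]; omega),
    Nat.card_eq_fintype_card, Fintype.card_coe, Finset.card_filter]
  rfl

lemma IsCentro.descentIndicator_sub {N : ℕ} {σ : Equiv.Perm (Fin N)} (hc : IsCentro σ) {p : ℕ}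
    (hp1 : 1 ≤ p) (hp2 : p < N) : descentIndicator σ (N - p) = descentIndicator σ p := by
  have c₁ := hc p hp1 (by omega)
  have c₂ := hc (p + 1) (by omega) hp2
  rw [show N + 1 - p = N - p + 1 by omega] at c₁
  rw [show N + 1 - (p + 1) = N - p by omega] at c₂
  unfold descentIndicator
  congr 1
  exact propext (by omega)

lemma IsCentro.des_eq {n : ℕ} {σ : Equiv.Perm (Fin (2 * n))} (hc : IsCentro σ) (hn : 1 ≤ n) :
    des σ = 2 * ∑ i ∈ Finset.Ico 1 n, descentIndicator σ i + descentIndicator σ n := by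
  have hright : ∑ i ∈ Finset.Ico (n + 1) (2 * n), descentIndicator σ i =
      ∑ i ∈ Finset.Ico 1 n, descentIndicator σ i := calc
    _ = ∑ i ∈ Finset.Ico (n + 1) (2 * n), descentIndicator σ (2 * n - i) :=
      Finset.sum_congr rfl fun p hp =>
        (hc.descentIndicator_sub (by grind) (Finset.mem_Ico.1 hp).2).symm
    _ = ∑ i ∈ Finset.Ico (2 * n + 1 - 2 * n) (2 * n + 1 - (n + 1)), descentIndicator σ i :=
      Finset.sum_Ico_reflect _ _ (by omega)
    _ = _ := by rw [show 2 * n + 1 - 2 * n = 1 by omega, show 2 * n + 1 - (n + 1) = n by omega]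
  rw [des_eq_sum_descentIndicator, ← Finset.sum_Ico_consecutive _ hn (by omega : n ≤ 2 * n),
    Finset.sum_eq_sum_Ico_succ_bot (by omega : n < 2 * n), hright]
  ring

namespace BijRel

variable {n : ℕ} {σ : Equiv.Perm (Fin (2 * n))} {α : Equiv.Perm (Fin (2 * n + 1))}

lemma avoids132_left (h : BijRel n σ α) (hα : Avoids132 α) : Avoids132 σ := by
  rintro ⟨i, j, k, hi, hij, hjk, hk, hik, hkj⟩
  refine hα ⟨bump n i, bump n j, bump n k, hi.trans le_bump, bump_strictMono hij,
    bump_strictMono hjk, bump_le_add_one.trans (by omega), ?_, ?_⟩ <;>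
  rwa [h.pval_bump (by omega) (by omega), h.pval_bump (by omega) (by omega),
    bump_strictMono.lt_iff_lt]

lemma avoids132_right (h : BijRel n σ α) (hc : IsCentro σ) (hσ : Avoids132 σ) :
    Avoids132 α := by
  rintro ⟨i, j, k, hi, hij, hjk, hk, hik, hkj⟩
  rcases eq_or_ne j (n + 1) with rfl | hj
  · obtain ⟨p, hp1, -, rfl, hpα⟩ := h.exists_pval_eq_bump hi (by omega) (by omega)
    obtain ⟨r, -, hr2, rfl, hrα⟩ := h.exists_pval_eq_bump (by omega) hk (by omega)
    rw [hpα, hrα, bump_strictMono.lt_iff_lt] at hik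
    rw [hrα, h.1, bump_lt_succ_iff] at hkj
    have := hσ.half_lt_pval_of_left_lt hc hp1 (bump_lt_succ_iff.1 hij) (lt_bump_iff.1 hjk) hr2
      hik
    omega
  obtain ⟨q, -, -, rfl, hqα⟩ := h.exists_pval_eq_bump (by omega) (by omega) hj
  rcases eq_or_ne i (n + 1) with rfl | hi'
  · obtain ⟨r, -, hr2, rfl, hrα⟩ := h.exists_pval_eq_bump (by omega) hk (by omega)
    rw [hrα, h.1, lt_bump_iff] at hik
    rw [hrα, hqα, bump_strictMono.lt_iff_lt] at hkj
    have := hσ.pval_le_of_right_half_lt hc (lt_bump_iff.1 hij)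
      (bump_strictMono.lt_iff_lt.1 hjk) hr2 hik
    omega
  obtain ⟨p, hp1, -, rfl, hpα⟩ := h.exists_pval_eq_bump hi (by omega) hi'
  rcases eq_or_ne k (n + 1) with rfl | hk'
  · rw [hpα, h.1, bump_lt_succ_iff] at hik
    rw [hqα, h.1, lt_bump_iff] at hkj
    have := hσ.pval_le_of_left_pval_le hc hp1 (bump_strictMono.lt_iff_lt.1 hij)
      (bump_lt_succ_iff.1 hjk) hik
    omega
  obtain ⟨r, -, hr2, rfl, hrα⟩ := h.exists_pval_eq_bump (by omega) hk hk'
  rw [hpα, hrα, bump_strictMono.lt_iff_lt] at hik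
  rw [hqα, hrα, bump_strictMono.lt_iff_lt] at hkj
  exact hσ ⟨p, q, r, hp1, bump_strictMono.lt_iff_lt.1 hij, bump_strictMono.lt_iff_lt.1 hjk, hr2,
    hik, hkj⟩

lemma descentIndicator_bump (h : BijRel n σ α) {p : ℕ} (hp1 : 1 ≤ p) (hp2 : p < 2 * n)
    (hpn : p ≠ n) : descentIndicator α (bump n p) = descentIndicator σ p := by
  unfold descentIndicator
  rw [← bump_add_one hpn, h.pval_bump (by omega) hp2, h.pval_bump hp1 hp2.le]
  simp only [bump_strictMono.lt_iff_lt]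

lemma des_eq (h : BijRel n σ α) (hc : IsCentro σ) (hn : 1 ≤ n) :
    des α = des σ + descentIndicator σ n := by
  have hmid := hc n hn (by omega)
  rw [show 2 * n + 1 - n = n + 1 by omega] at hmid
  have hσn := h.pval_bump hn (by omega)
  rw [bump_of_le le_rfl] at hσn
  have hσn' := h.pval_bump (p := n + 1) (by omega) (by omega)
  rw [bump_of_lt (lt_add_one n)] at hσn'
  have hα₁ : descentIndicator α n = descentIndicator σ n := by
    unfold descentIndicator; rw [h.1, hσn]; unfold bump; split_ifs <;> omega
  have hα₂ : descentIndicator α (n + 1) = descentIndicator σ n := by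
    unfold descentIndicator; rw [h.1, hσn']; unfold bump; split_ifs <;> omega
  have hleft : ∑ i ∈ Finset.Ico 1 n, descentIndicator α i =
      ∑ i ∈ Finset.Ico 1 n, descentIndicator σ i := Finset.sum_congr rfl fun p hp => by
    simp only [Finset.mem_Ico] at hp
    rw [← h.descentIndicator_bump hp.1 (by omega) hp.2.ne, bump_of_le hp.2.le]
  have hright : ∑ i ∈ Finset.Ico (n + 2) (2 * n + 1), descentIndicator α i =
      ∑ i ∈ Finset.Ico (n + 1) (2 * n), descentIndicator σ i := by
    change ∑ i ∈ Finset.Ico (n + 1 + 1) (2 * n + 1), _ = _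
    rw [← Finset.sum_Ico_add']
    refine Finset.sum_congr rfl fun p hp => ?_
    simp only [Finset.mem_Ico] at hp
    rw [← h.descentIndicator_bump (by omega) hp.2 (by omega), bump_of_lt (by omega)]
  rw [des_eq_sum_descentIndicator, des_eq_sum_descentIndicator,
    ← Finset.sum_Ico_consecutive _ hn (by omega : n ≤ 2 * n + 1),
    ← Finset.sum_Ico_consecutive _ hn (by omega : n ≤ 2 * n),
    Finset.sum_eq_sum_Ico_succ_bot (by omega : n < 2 * n + 1),
    Finset.sum_eq_sum_Ico_succ_bot (by omega : n + 1 < 2 * n + 1),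
    Finset.sum_eq_sum_Ico_succ_bot (by omega : n < 2 * n), hleft, hright, hα₁, hα₂]
  ring

end BijRel

lemma IsCentro.pval_succ_self {n : ℕ} {α : Equiv.Perm (Fin (2 * n + 1))} (hc : IsCentro α) :
    pval α (n + 1) = n + 1 := by
  have := hc (n + 1) (by omega) (by omega)
  rw [show 2 * n + 1 + 1 - (n + 1) = n + 1 by omega] at this
  omega

/-- the insertion map is a well-defined bijection from `C_{2n}(132)`
onto `C_{2n+1}(132)`, and `des α = des σ` if `des σ` is even while
`des α = des σ + 1` if `des σ` is odd. -/
theorem stmt17 (n : ℕ) (hn : 1 ≤ n) :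
    (∀ σ : Equiv.Perm (Fin (2 * n)), IsCentro σ → Avoids132 σ →
      ∃! α : Equiv.Perm (Fin (2 * n + 1)), BijRel n σ α) ∧
    (∀ (σ : Equiv.Perm (Fin (2 * n))) (α : Equiv.Perm (Fin (2 * n + 1))),
      IsCentro σ → Avoids132 σ → BijRel n σ α →
        IsCentro α ∧ Avoids132 α ∧
        des α = (if des σ % 2 = 0 then des σ else des σ + 1)) ∧
    (∀ α : Equiv.Perm (Fin (2 * n + 1)), IsCentro α → Avoids132 α →
      ∃! σ : Equiv.Perm (Fin (2 * n)), IsCentro σ ∧ Avoids132 σ ∧ BijRel n σ α) := by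
  refine ⟨fun σ _ _ => ?_, fun σ α hc hσ h => ?_, fun α hc hα => ?_⟩
  · obtain ⟨α, h⟩ := exists_bijRel σ
    exact ⟨α, h, fun α' h' => h'.right_unique h⟩
  · refine ⟨h.isCentro_iff.2 hc, h.avoids132_right hc hσ, ?_⟩
    have := descentIndicator_le_one σ n
    rw [h.des_eq hc hn, hc.des_eq hn]
    split_ifs <;> omega
  · obtain ⟨σ, h⟩ := exists_bijRel_of_pval_center hc.pval_succ_self
    have hσ := h.isCentro_iff.1 hc
    exact ⟨σ, ⟨hσ, h.avoids132_left hα, h⟩, fun σ' h' => h'.2.2.left_unique h⟩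
end

section
/- For every n ≥ 1 and every d ≥ 0: the number of permutations in C_{2n+1}(123) with exactly d descents equals the number of 123-avoiding permutations of {1,…,n} with exactly (d−2)/2 descents if d is even and d ≥ 2, and equals 0 if d is odd or d = 0. -/
section OneIndexed

variable {N : ℕ}

lemma pval_succ (σ : Equiv.Perm (Fin N)) {i : ℕ} (h : i < N) :
    pval σ (i + 1) = (σ ⟨i, h⟩ : ℕ) + 1 := by
  rw [pval, dif_pos (by omega)]
  rfl

lemma pval_bounds (σ : Equiv.Perm (Fin N)) {i : ℕ} (h1 : 1 ≤ i) (h2 : i ≤ N) :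
    1 ≤ pval σ i ∧ pval σ i ≤ N := by
  obtain ⟨i, rfl⟩ : ∃ j, i = j + 1 := ⟨i - 1, by omega⟩
  rw [pval_succ σ (by omega)]
  have := (σ ⟨i, by omega⟩).isLt
  omega

lemma pval_injOn_s19 (σ : Equiv.Perm (Fin N)) : Set.InjOn (pval σ) (Set.Icc 1 N) := by
  rintro i ⟨hi1, hi2⟩ j ⟨hj1, hj2⟩ h
  obtain ⟨i, rfl⟩ : ∃ k, i = k + 1 := ⟨i - 1, by omega⟩
  obtain ⟨j, rfl⟩ : ∃ k, j = k + 1 := ⟨j - 1, by omega⟩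
  rw [pval_succ σ (by omega), pval_succ σ (by omega)] at h
  have := congrArg Fin.val (σ.injective (Fin.ext (by omega) :
    σ ⟨i, by omega⟩ = σ ⟨j, by omega⟩))
  simp only at this
  omega

lemma pval_ext {σ τ : Equiv.Perm (Fin N)} (h : Set.EqOn (pval σ) (pval τ) (Set.Icc 1 N)) :
    σ = τ := by
  ext x
  have := h (show (x : ℕ) + 1 ∈ Set.Icc 1 N from ⟨by omega, x.isLt⟩)
  rw [pval_succ σ x.isLt, pval_succ τ x.isLt] at this
  simpa using this

noncomputable def ofPval (f : ℕ → ℕ) (hf : Set.MapsTo f (Set.Icc 1 N) (Set.Icc 1 N))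
    (hinj : Set.InjOn f (Set.Icc 1 N)) : Equiv.Perm (Fin N) :=
  have hx (x : Fin N) : (x : ℕ) + 1 ∈ Set.Icc 1 N := ⟨by omega, x.isLt⟩
  Equiv.ofBijective (fun x => ⟨f (x + 1) - 1, by have := hf (hx x); simp at this; omega⟩)
    (Finite.injective_iff_bijective.mp fun x y hxy => by
      have hfx := hf (hx x)
      have hfy := hf (hx y)
      simp only [Set.mem_Icc, Fin.mk.injEq] at hfx hfy hxy
      have := hinj (hx x) (hx y) (by omega)
      exact Fin.ext (by omega))

lemma pval_ofPval (f : ℕ → ℕ) (hf : Set.MapsTo f (Set.Icc 1 N) (Set.Icc 1 N))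
    (hinj : Set.InjOn f (Set.Icc 1 N)) : Set.EqOn (pval (ofPval f hf hinj)) f (Set.Icc 1 N) := by
  rintro i ⟨hi1, hi2⟩
  obtain ⟨i, rfl⟩ : ∃ j, i = j + 1 := ⟨i - 1, by omega⟩
  have := hf (show i + 1 ∈ Set.Icc 1 N from ⟨hi1, hi2⟩)
  rw [pval_succ _ (by omega)]
  simp only [ofPval, Equiv.ofBijective_apply, Set.mem_Icc] at this ⊢
  omega

def descents (σ : Equiv.Perm (Fin N)) : Finset ℕ :=
  (Finset.Ico 1 N).filter fun i => pval σ (i + 1) < pval σ i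

lemma mem_descents {σ : Equiv.Perm (Fin N)} {i : ℕ} :
    i ∈ descents σ ↔ 1 ≤ i ∧ i < N ∧ pval σ (i + 1) < pval σ i := by
  simp [descents, and_assoc]

lemma des_eq_card_descents (σ : Equiv.Perm (Fin N)) : des σ = (descents σ).card := by
  rw [← Nat.card_eq_finsetCard, des]
  exact Nat.card_congr (Equiv.subtypeEquivRight fun i => by rw [mem_descents]; omega)

end OneIndexed

section CentroLift

variable {n : ℕ}

def centroVal (n : ℕ) (f : ℕ → ℕ) (i : ℕ) : ℕ :=
  if i ≤ n then f i + (n + 1) else if i = n + 1 then n + 1 else n + 1 - f (2 * n + 2 - i)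

lemma centroVal_mapsTo (τ : Equiv.Perm (Fin n)) :
    Set.MapsTo (centroVal n (pval τ)) (Set.Icc 1 (2 * n + 1)) (Set.Icc 1 (2 * n + 1)) := by
  rintro i ⟨hi1, hi2⟩
  have := pval_bounds τ (i := i)
  have := pval_bounds τ (i := 2 * n + 2 - i)
  simp only [centroVal, Set.mem_Icc]
  split_ifs <;> omega

lemma centroVal_injOn (τ : Equiv.Perm (Fin n)) :
    Set.InjOn (centroVal n (pval τ)) (Set.Icc 1 (2 * n + 1)) := by
  rintro i ⟨hi1, hi2⟩ j ⟨hj1, hj2⟩ h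
  have := pval_bounds τ (i := i)
  have := pval_bounds τ (i := j)
  have := pval_bounds τ (i := 2 * n + 2 - i)
  have := pval_bounds τ (i := 2 * n + 2 - j)
  have hτ := @pval_injOn_s19 _ τ
  simp only [centroVal] at h
  split_ifs at h
  · exact hτ ⟨hi1, by omega⟩ ⟨hj1, by omega⟩ (by omega)
  all_goals first
    | omega
    | have := hτ (show 2 * n + 2 - i ∈ Set.Icc 1 n by simp only [Set.mem_Icc]; omega)
        (show 2 * n + 2 - j ∈ Set.Icc 1 n by simp only [Set.mem_Icc]; omega) (by omega)
      omega

/-- The centrosymmetric lift `τ ⊖ 1 ⊖ τʳᶜ` of `τ`. -/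
noncomputable def centroLift (n : ℕ) (τ : Equiv.Perm (Fin n)) : Equiv.Perm (Fin (2 * n + 1)) :=
  ofPval (centroVal n (pval τ)) (centroVal_mapsTo τ) (centroVal_injOn τ)

variable (τ : Equiv.Perm (Fin n))

lemma pval_centroLift_of_le {i : ℕ} (h1 : 1 ≤ i) (h2 : i ≤ n) :
    pval (centroLift n τ) i = pval τ i + (n + 1) := by
  rw [centroLift, pval_ofPval _ _ _ ⟨h1, by omega⟩, centroVal, if_pos h2]

lemma pval_centroLift_middle : pval (centroLift n τ) (n + 1) = n + 1 := by
  rw [centroLift, pval_ofPval _ _ _ ⟨by omega, by omega⟩, centroVal, if_neg (by omega),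
    if_pos rfl]

lemma pval_centroLift_add_of_lt {i : ℕ} (h1 : n + 1 < i) (h2 : i ≤ 2 * n + 1) :
    pval (centroLift n τ) i + pval τ (2 * n + 2 - i) = n + 1 := by
  have := pval_bounds τ (i := 2 * n + 2 - i) (by omega) (by omega)
  rw [centroLift, pval_ofPval _ _ _ ⟨by omega, h2⟩, centroVal, if_neg (by omega),
    if_neg (by omega)]
  omega

lemma isCentro_centroLift : IsCentro (centroLift n τ) := by
  intro i h1 h2
  rcases lt_trichotomy i (n + 1) with h | rfl | h
  · have := pval_centroLift_add_of_lt τ (i := 2 * n + 1 + 1 - i) (by omega) (by omega)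
    rw [show 2 * n + 2 - (2 * n + 1 + 1 - i) = i by omega] at this
    rw [pval_centroLift_of_le τ h1 (by omega)]
    omega
  · rw [show 2 * n + 1 + 1 - (n + 1) = n + 1 by omega, pval_centroLift_middle]
    omega
  · have := pval_centroLift_add_of_lt τ h h2
    rw [pval_centroLift_of_le τ (i := 2 * n + 1 + 1 - i) (by omega) (by omega),
      show 2 * n + 1 + 1 - i = 2 * n + 2 - i by omega]
    omega

lemma centroLift_injective : Function.Injective (centroLift (n := n)) := fun τ₁ τ₂ h =>
  pval_ext fun i ⟨h1, h2⟩ => by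
    have := congrArg (pval · i) h
    simp only [pval_centroLift_of_le _ h1 h2] at this
    omega

/-- The three blocks of `centroLift n τ` decrease from left to right. -/
lemma centroLift_ascent_same_block {i j : ℕ} (h1 : 1 ≤ i) (h2 : j ≤ 2 * n + 1)
    (h : pval (centroLift n τ) i < pval (centroLift n τ) j) : j ≤ n ∨ n + 1 < i := by
  by_contra! hc
  have hi : n + 1 ≤ pval (centroLift n τ) i := by
    rcases Nat.lt_or_ge i (n + 1) with hi | hi
    · rw [pval_centroLift_of_le τ h1 (by omega)]; omega
    · rw [show i = n + 1 by omega, pval_centroLift_middle]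
  have hj : pval (centroLift n τ) j ≤ n + 1 := by
    rcases Nat.lt_or_ge (n + 1) j with hj | hj
    · have := pval_centroLift_add_of_lt τ hj h2; omega
    · rw [show j = n + 1 by omega, pval_centroLift_middle]
  omega

lemma avoids123_centroLift {τ : Equiv.Perm (Fin n)} (hτ : Avoids123 τ) :
    Avoids123 (centroLift n τ) := by
  rintro ⟨i, j, k, hi, hij, hjk, hk, h1, h2⟩
  rcases centroLift_ascent_same_block τ hi (by omega) h1 with hj | hi'
  · have hk : k ≤ n := (centroLift_ascent_same_block τ (by omega) hk h2).resolve_right (by omega)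
    rw [pval_centroLift_of_le τ hi (by omega), pval_centroLift_of_le τ (by omega) hj] at h1
    rw [pval_centroLift_of_le τ (by omega) hj, pval_centroLift_of_le τ (by omega) hk] at h2
    exact hτ ⟨i, j, k, hi, hij, hjk, hk, by omega, by omega⟩
  · have := pval_centroLift_add_of_lt τ hi' (by omega)
    have := pval_centroLift_add_of_lt τ (i := j) (by omega) (by omega)
    have := pval_centroLift_add_of_lt τ (i := k) (by omega) hk
    exact hτ ⟨2 * n + 2 - k, 2 * n + 2 - j, 2 * n + 2 - i, by omega, by omega, by omega, by omega,
      by omega, by omega⟩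

lemma avoids123_of_centroLift {τ : Equiv.Perm (Fin n)} (h : Avoids123 (centroLift n τ)) :
    Avoids123 τ := by
  rintro ⟨i, j, k, hi, hij, hjk, hk, h1, h2⟩
  refine h ⟨i, j, k, hi, hij, hjk, by omega, ?_, ?_⟩ <;>
    simp only [pval_centroLift_of_le τ (by omega : 1 ≤ i) (by omega : i ≤ n),
      pval_centroLift_of_le τ (by omega : 1 ≤ j) (by omega : j ≤ n),
      pval_centroLift_of_le τ (by omega : 1 ≤ k) hk] <;> omega

lemma descents_centroLift (hn : 1 ≤ n) :
    descents (centroLift n τ) =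
      descents τ ∪ {n, n + 1} ∪ (descents τ).image (2 * n + 1 - ·) := by
  ext i
  simp only [Finset.mem_union, Finset.mem_insert, Finset.mem_singleton, Finset.mem_image,
    mem_descents]
  constructor
  · rintro ⟨hi, hi', hdes⟩
    rcases show i < n ∨ i = n ∨ i = n + 1 ∨ n + 1 < i by omega with h | rfl | rfl | h
    · rw [pval_centroLift_of_le τ hi h.le,
        pval_centroLift_of_le τ (i := i + 1) (by omega) h] at hdes
      exact Or.inl (Or.inl ⟨hi, h, by omega⟩)
    · simp
    · simp
    · have := pval_centroLift_add_of_lt τ h (by omega)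
      have := pval_centroLift_add_of_lt τ (i := i + 1) (by omega) (by omega)
      refine Or.inr ⟨2 * n + 1 - i, ⟨by omega, by omega, ?_⟩, by omega⟩
      rw [show 2 * n + 1 - i + 1 = 2 * n + 2 - i by omega]
      rw [show 2 * n + 2 - (i + 1) = 2 * n + 1 - i by omega] at this
      omega
  · rintro ((⟨hi, hin, hdes⟩ | rfl | rfl) | ⟨j, ⟨hj, hjn, hdes⟩, rfl⟩)
    · refine ⟨hi, by omega, ?_⟩
      rw [pval_centroLift_of_le τ hi hin.le, pval_centroLift_of_le τ (i := i + 1) (by omega) hin]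
      omega
    · refine ⟨hn, by omega, ?_⟩
      have := (pval_bounds τ hn le_rfl).1
      rw [pval_centroLift_middle, pval_centroLift_of_le τ hn le_rfl]
      omega
    · refine ⟨by omega, by omega, ?_⟩
      have := pval_centroLift_add_of_lt τ (i := n + 1 + 1) (by omega) (by omega)
      have := (pval_bounds τ (i := 2 * n + 2 - (n + 1 + 1)) (by omega) (by omega)).1
      rw [pval_centroLift_middle]
      omega
    · refine ⟨by omega, by omega, ?_⟩
      have := pval_centroLift_add_of_lt τ (i := 2 * n + 1 - j) (by omega) (by omega)
      have := pval_centroLift_add_of_lt τ (i := 2 * n + 1 - j + 1) (by omega) (by omega)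
      rw [show 2 * n + 2 - (2 * n + 1 - j) = j + 1 by omega] at *
      rw [show 2 * n + 2 - (2 * n + 1 - j + 1) = j by omega] at *
      omega

lemma des_centroLift (hn : 1 ≤ n) : des (centroLift n τ) = 2 * des τ + 2 := by
  have hD : ∀ i ∈ descents τ, 1 ≤ i ∧ i < n := fun i hi => (mem_descents.1 hi).imp_right And.left
  rw [des_eq_card_descents, des_eq_card_descents, descents_centroLift τ hn,
    Finset.card_union_of_disjoint, Finset.card_union_of_disjoint,
    Finset.card_image_of_injOn fun a ha b hb _ => by
      have := hD a ha; have := hD b hb; omega,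
    Finset.card_pair (by omega)]
  · ring
  · simp only [Finset.disjoint_left, Finset.mem_insert, Finset.mem_singleton]
    intro a ha; have := hD a ha; omega
  · simp only [Finset.disjoint_left, Finset.mem_union, Finset.mem_insert, Finset.mem_singleton,
      Finset.mem_image, not_exists, not_and]
    intro a ha b hb
    have := hD b hb
    rcases ha with ha | rfl | rfl
    · have := hD a ha; omega
    all_goals omega

end CentroLift

section CentroAvoiding

variable {n : ℕ} {σ : Equiv.Perm (Fin (2 * n + 1))}

lemma IsCentro.pval_middle (hC : IsCentro σ) : pval σ (n + 1) = n + 1 := by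
  have := hC (n + 1) (by omega) (by omega)
  rw [show 2 * n + 1 + 1 - (n + 1) = n + 1 by omega] at this
  omega

lemma IsCentro.lt_pval_of_avoids123 (hC : IsCentro σ) (hA : Avoids123 σ) {i : ℕ} (h1 : 1 ≤ i)
    (h2 : i ≤ n) : n + 1 < pval σ i := by
  have hne : pval σ i ≠ n + 1 := fun h =>
    absurd (pval_injOn_s19 σ ⟨h1, by omega⟩ ⟨by omega, by omega⟩ (h.trans hC.pval_middle.symm))
      (by omega)
  have := hC i h1 (by omega)
  by_contra! hlt
  exact hA ⟨i, n + 1, 2 * n + 1 + 1 - i, h1, by omega, by omega, by omega,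
    by rw [hC.pval_middle]; omega, by rw [hC.pval_middle]; omega⟩

lemma IsCentro.exists_centroLift_eq_of_avoids123 (hC : IsCentro σ) (hA : Avoids123 σ) :
    ∃ τ, centroLift n τ = σ := by
  have hlow {i : ℕ} (h1 : 1 ≤ i) (h2 : i ≤ n) : n + 1 < pval σ i ∧ pval σ i ≤ 2 * n + 1 :=
    ⟨hC.lt_pval_of_avoids123 hA h1 h2, (pval_bounds σ h1 (by omega)).2⟩
  have hmaps : Set.MapsTo (fun i => pval σ i - (n + 1)) (Set.Icc 1 n) (Set.Icc 1 n) :=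
    fun i ⟨h1, h2⟩ => by have := hlow h1 h2; simp only [Set.mem_Icc]; omega
  have hinj : Set.InjOn (fun i => pval σ i - (n + 1)) (Set.Icc 1 n) :=
    fun i ⟨hi1, hi2⟩ j ⟨hj1, hj2⟩ h => by
      have := hlow hi1 hi2; have := hlow hj1 hj2
      exact pval_injOn_s19 σ ⟨hi1, by omega⟩ ⟨hj1, by omega⟩ (by simp only at h; omega)
  refine ⟨ofPval _ hmaps hinj, pval_ext fun i ⟨h1, h2⟩ => ?_⟩
  rcases lt_trichotomy i (n + 1) with h | rfl | h
  · rw [pval_centroLift_of_le _ h1 (by omega), pval_ofPval _ hmaps hinj ⟨h1, by omega⟩]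
    have := hlow h1 (by omega)
    simp only
    omega
  · rw [pval_centroLift_middle, hC.pval_middle]
  · have := pval_centroLift_add_of_lt (ofPval _ hmaps hinj) h h2
    rw [pval_ofPval _ hmaps hinj ⟨by omega, by omega⟩] at this
    have := hlow (i := 2 * n + 2 - i) (by omega) (by omega)
    have := hC i h1 h2
    rw [show 2 * n + 1 + 1 - i = 2 * n + 2 - i by omega] at this
    simp only at *
    omega

end CentroAvoiding

/-- for `n ≥ 1`, `d ≥ 0`, the number of permutations in `C_{2n+1}(123)`
with exactly `d` descents equals the number of 123-avoiding permutations of `{1,…,n}`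
with exactly `(d−2)/2` descents if `d` is even and `d ≥ 2`, and equals `0` if `d` is
odd or `d = 0`. -/
theorem stmt19 (n d : ℕ) (hn : 1 ≤ n) :
    Nat.card {σ : Equiv.Perm (Fin (2 * n + 1)) // IsCentro σ ∧ Avoids123 σ ∧ des σ = d}
      = if d % 2 = 0 ∧ 2 ≤ d then
          Nat.card {τ : Equiv.Perm (Fin n) // Avoids123 τ ∧ des τ = (d - 2) / 2}
        else 0 := by
  split_ifs with hd
  · refine (Nat.card_congr (Equiv.ofBijective
      (fun τ => ⟨centroLift n τ.1, isCentro_centroLift τ.1, avoids123_centroLift τ.2.1, by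
        rw [des_centroLift τ.1 hn, τ.2.2]; omega⟩) ⟨?_, ?_⟩)).symm
    · exact fun τ₁ τ₂ h => Subtype.ext (centroLift_injective (congrArg Subtype.val h))
    · rintro ⟨σ, hC, hA, hdes⟩
      obtain ⟨τ, rfl⟩ := hC.exists_centroLift_eq_of_avoids123 hA
      rw [des_centroLift τ hn] at hdes
      exact ⟨⟨τ, avoids123_of_centroLift hA, by omega⟩, rfl⟩
  · refine Nat.card_eq_zero.2 (Or.inl ⟨fun ⟨σ, hC, hA, hdes⟩ => hd ?_⟩)
    obtain ⟨τ, rfl⟩ := hC.exists_centroLift_eq_of_avoids123 hA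
    rw [des_centroLift τ hn] at hdes
    omega
end
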